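/- arXiv:1901.06574 — 11 statements merged into one kernel-verified Lean document; each statement's English description precedes it below -/
import Mathlib

section
/- Let c > 1 and let a, b ≥ 0 satisfy a − 2b > log 4 + log(c/(c−1)). Then (a,b) is a good pair, and for every n ≥ 2 and every (a,b)-good chain x₀,…,xₙ in the hyperbolic upper half-plane ℍ², one has |τ(x₀,…,xₙ)| ≤ 8c·(n−2)·e^{2b−a}. -/
open UpperHalfPlane Real Filter

/-- The tension of the chain `x 0, x 1, …, x n`:
`τ = Σ_{j=1}^{n−1} d(x_{j−1},x_{j+1}) − Σ_{j=2}^{n−1} d(x_{j−1},x_j) − d(x_0,x_n)`. -/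
noncomputable def tension (n : ℕ) (x : ℕ → UpperHalfPlane) : ℝ :=
  (∑ j ∈ Finset.range (n - 1), dist (x j) (x (j + 2)))
    - (∑ j ∈ Finset.range (n - 2), dist (x (j + 1)) (x (j + 2)))
    - dist (x 0) (x n)

/-- The Gromov product `⟨x,y⟩_z = (d(x,z)+d(z,y)−d(x,y))/2`. -/
noncomputable def gromov (x y z : UpperHalfPlane) : ℝ :=
  (dist x z + dist z y - dist x y) / 2

/-- A pair `(a,b)` is good if `a, b ≥ 0` and `sinh(a−b) > 2·sinh(a/2)`. -/
def GoodPair (a b : ℝ) : Prop :=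
  0 ≤ a ∧ 0 ≤ b ∧ Real.sinh (a - b) > 2 * Real.sinh (a / 2)

/-- The chain `x 0, …, x n` is `(a,b)`-good. -/
def GoodChain (a b : ℝ) (n : ℕ) (x : ℕ → UpperHalfPlane) : Prop :=
  (∀ j < n, dist (x (j + 1)) (x j) ≥ a) ∧
  (∀ j, 1 ≤ j → j + 1 ≤ n → gromov (x (j - 1)) (x (j + 1)) (x j) ≤ b)

/-!
Put `σ(z, w) = sinh (d(z, w) / 2) = |z - w| / (2 √(Im z Im w))`, so that the Euclidean Ptolemy
inequality in `ℂ` gives Ptolemy's inequality for `σ` on `ℍ`, and let `ε = exp (2b - a) < 1/4`.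
Along an `(a, b)`-good chain every step at least doubles `σ` from the previous vertex, and
`σ(x_k, x_{k+1}) σ(x_{k+2}, x_{k+3}) ≤ ε σ(x_k, x_{k+2}) σ(x_{k+1}, x_{k+3})`. Fed into Ptolemy's
inequality inductively, this keeps the cross ratio
`σ(x_0, x_k) σ(x_{k+1}, x_{k+2}) / σ(x_0, x_{k+1}) σ(x_k, x_{k+2})` below `ε / (1 - 2ε)`, and one
more application of Ptolemy pins the ratio
`σ(x_0, x_{k+3}) σ(x_{k+1}, x_{k+2}) / σ(x_0, x_{k+2}) σ(x_{k+1}, x_{k+3})` to `1 + O(ε)`.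
All four distances are at least `a`, so `2σ = e^{d/2} (1 - O(ε))` and this ratio is
`exp (⟨x_{k+1}, x_{k+3}⟩_{x_{k+2}} - ⟨x_0, x_{k+3}⟩_{x_{k+2}})` up to another factor `1 + O(ε)`:
the difference of Gromov products is at most `-log (1 - 4ε) ≤ 4cε` in absolute value. The tension
telescopes into twice the sum of these `n - 2` differences. The pair `(a, b)` is good because
`sinh (a - b) ≥ e^{a/2 - b} sinh (a / 2)` and `e^{a/2 - b} > 2`.
-/

open Finset

lemma exp_mul_sinh_le_sinh_add (v : ℝ) {t : ℝ} (ht : 0 ≤ t) : exp t * sinh v ≤ sinh (v + t) := by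
  have h : exp (-v - t) ≤ exp (t - v) := exp_le_exp.2 (by linarith)
  rw [sinh_eq, sinh_eq, mul_div_assoc', mul_sub, ← exp_add, ← exp_add]
  rw [show t + v = v + t by ring, show t + -v = t - v by ring, show -(v + t) = -v - t by ring]
  linarith

lemma two_le_exp_half_of_four_mul_exp_neg_le {s : ℝ} (h : 4 * exp (-s) ≤ 1) : 2 ≤ exp (s / 2) := by
  have hsq : exp (s / 2) ^ 2 * exp (-s) = 1 := by
    rw [sq, ← exp_add, ← exp_add, show s / 2 + s / 2 + -s = 0 by ring, exp_zero]
  nlinarith [exp_pos (s / 2), exp_pos (-s)]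

lemma two_lt_exp_half_of_four_mul_exp_neg_lt {s : ℝ} (h : 4 * exp (-s) < 1) : 2 < exp (s / 2) := by
  have hsq : exp (s / 2) ^ 2 * exp (-s) = 1 := by
    rw [sq, ← exp_add, ← exp_add, show s / 2 + s / 2 + -s = 0 by ring, exp_zero]
  by_contra! hle
  have : exp (s / 2) ^ 2 ≤ 4 := by nlinarith [exp_pos (s / 2)]
  nlinarith [exp_pos (-s)]

/-- From `2 sinh (t / 2) = exp (t / 2) * (1 - exp (-t))`. -/
lemma sinh_half_mul_sinh_half_bounds {ε s t : ℝ} (hε : ε ≤ 1) (hs : exp (-s) ≤ ε)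
    (ht : exp (-t) ≤ ε) :
    (1 - ε) ^ 2 * exp ((s + t) / 2) ≤ 4 * (sinh (s / 2) * sinh (t / 2)) ∧
      4 * (sinh (s / 2) * sinh (t / 2)) ≤ exp ((s + t) / 2) := by
  have factor (u : ℝ) (hu : exp (-u) ≤ ε) :
      (1 - ε) * exp (u / 2) ≤ 2 * sinh (u / 2) ∧ 0 ≤ 2 * sinh (u / 2) ∧
        2 * sinh (u / 2) ≤ exp (u / 2) := by
    have hsplit : exp (-(u / 2)) = exp (-u) * exp (u / 2) := by rw [← exp_add]; ring_nf
    have hpos := exp_pos (u / 2)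
    rw [sinh_eq, hsplit]
    refine ⟨by nlinarith, by nlinarith [exp_pos (-u)], by nlinarith [exp_pos (-u)]⟩
  obtain ⟨hs₁, hs₀, hs₂⟩ := factor s hs
  obtain ⟨ht₁, ht₀, ht₂⟩ := factor t ht
  have hexp : exp ((s + t) / 2) = exp (s / 2) * exp (t / 2) := by rw [← exp_add]; ring_nf
  have h1ε : 0 ≤ 1 - ε := by linarith
  constructor
  · calc (1 - ε) ^ 2 * exp ((s + t) / 2) = ((1 - ε) * exp (s / 2)) * ((1 - ε) * exp (t / 2)) := by
          rw [hexp]; ring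
      _ ≤ (2 * sinh (s / 2)) * (2 * sinh (t / 2)) :=
          mul_le_mul hs₁ ht₁ (by positivity) hs₀
      _ = 4 * (sinh (s / 2) * sinh (t / 2)) := by ring
  · calc 4 * (sinh (s / 2) * sinh (t / 2)) = (2 * sinh (s / 2)) * (2 * sinh (t / 2)) := by ring
      _ ≤ exp (s / 2) * exp (t / 2) := mul_le_mul hs₂ ht₂ ht₀ (exp_pos _).le
      _ = exp ((s + t) / 2) := hexp.symm

lemma one_sub_four_mul_le_exp_of_sinh_half {ε s₁ s₂ t₁ t₂ : ℝ} (hε : 4 * ε ≤ 1)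
    (hs₁ : exp (-s₁) ≤ ε) (hs₂ : exp (-s₂) ≤ ε) (ht₁ : exp (-t₁) ≤ ε) (ht₂ : exp (-t₂) ≤ ε)
    (h₁ : (1 - 3 * ε) * (sinh (s₁ / 2) * sinh (s₂ / 2)) ≤
      (1 - 2 * ε) * (sinh (t₁ / 2) * sinh (t₂ / 2)))
    (h₂ : (1 - 2 * ε) * (sinh (t₁ / 2) * sinh (t₂ / 2)) ≤
      (1 - ε) * (sinh (s₁ / 2) * sinh (s₂ / 2))) :
    1 - 4 * ε ≤ exp ((t₁ + t₂ - s₁ - s₂) / 2) ∧ 1 - 4 * ε ≤ exp ((s₁ + s₂ - t₁ - t₂) / 2) := by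
  have hε₀ : 0 ≤ ε := (exp_pos _).le.trans hs₁
  obtain ⟨hS₁, hS₂⟩ := sinh_half_mul_sinh_half_bounds (by linarith) hs₁ hs₂
  obtain ⟨hT₁, hT₂⟩ := sinh_half_mul_sinh_half_bounds (by linarith) ht₁ ht₂
  set S := exp ((s₁ + s₂) / 2)
  set T := exp ((t₁ + t₂) / 2)
  have hS : 0 < S := exp_pos _
  have hT : 0 < T := exp_pos _
  have hST : exp ((t₁ + t₂ - s₁ - s₂) / 2) = T / S := by rw [← exp_sub]; ring_nf
  have hTS : exp ((s₁ + s₂ - t₁ - t₂) / 2) = S / T := by rw [← exp_sub]; ring_nf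
  rw [hST, hTS, le_div_iff₀ hS, le_div_iff₀ hT]
  constructor
  · have : (1 - 2 * ε) * ((1 - 4 * ε) * S) ≤ (1 - 2 * ε) * T := by
      calc (1 - 2 * ε) * ((1 - 4 * ε) * S) ≤ (1 - 3 * ε) * ((1 - ε) ^ 2 * S) := by
            nlinarith [mul_nonneg (mul_nonneg hε₀ hS.le) (by nlinarith : 0 ≤ 1 - ε - 3 * ε ^ 2)]
        _ ≤ (1 - 3 * ε) * (4 * (sinh (s₁ / 2) * sinh (s₂ / 2))) := by gcongr; linarith
        _ ≤ (1 - 2 * ε) * (4 * (sinh (t₁ / 2) * sinh (t₂ / 2))) := by linarith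
        _ ≤ (1 - 2 * ε) * T := by gcongr; linarith
    exact le_of_mul_le_mul_left this (by linarith)
  · have : (1 - ε) * ((1 - 4 * ε) * T) ≤ (1 - ε) * S := by
      calc (1 - ε) * ((1 - 4 * ε) * T) ≤ (1 - 2 * ε) * ((1 - ε) ^ 2 * T) := by
            nlinarith [mul_nonneg (mul_nonneg hε₀ hT.le) (by nlinarith : 0 ≤ (1 - ε) * (1 + 2 * ε))]
        _ ≤ (1 - 2 * ε) * (4 * (sinh (t₁ / 2) * sinh (t₂ / 2))) := by gcongr; linarith
        _ ≤ (1 - ε) * (4 * (sinh (s₁ / 2) * sinh (s₂ / 2))) := by linarith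
        _ ≤ (1 - ε) * S := by gcongr; linarith
    exact le_of_mul_le_mul_left this (by linarith)

lemma abs_sub_le_of_le_exp_sub {κ L s t : ℝ} (hL : 0 ≤ L) (hκ : 1 ≤ κ * (1 + L))
    (h₁ : κ ≤ exp (s - t)) (h₂ : κ ≤ exp (t - s)) : |s - t| ≤ L := by
  have hκ₀ : 0 < κ := pos_of_mul_pos_left (by linarith) (by linarith : (0 : ℝ) ≤ 1 + L)
  have key (u : ℝ) (hu : κ ≤ exp u) : -u ≤ L := by
    refine exp_le_exp.1 ?_
    calc exp (-u) = (exp u)⁻¹ := exp_neg u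
      _ ≤ κ⁻¹ := inv_anti₀ hκ₀ hu
      _ ≤ 1 + L := (inv_le_iff_one_le_mul₀' hκ₀).2 hκ
      _ ≤ exp L := by linarith [add_one_le_exp L]
  exact abs_sub_le_iff.2 ⟨by linarith [key _ h₂], by linarith [key _ h₁]⟩

lemma four_mul_mul_exp_lt_sub_one {a b c : ℝ} (hc : 1 < c)
    (h : a - 2 * b > log 4 + log (c / (c - 1))) :
    4 * c * exp (2 * b - a) < c - 1 := by
  have hc₁ : 0 < c - 1 := by linarith
  have hlog : log (4 * c / (c - 1)) < a - 2 * b := by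
    rw [mul_div_assoc, log_mul (by norm_num) (by positivity)]; exact h
  have hlt := (log_lt_iff_lt_exp (by positivity)).1 hlog
  rw [div_lt_iff₀ hc₁] at hlt
  have hinv : exp (a - 2 * b) * exp (2 * b - a) = 1 := by rw [← exp_add]; ring_nf; exact exp_zero
  nlinarith [exp_pos (2 * b - a)]

lemma goodPair_of_four_mul_exp_lt {a b : ℝ} (ha : 0 ≤ a) (hb : 0 ≤ b)
    (h : 4 * exp (2 * b - a) < 1) :
    GoodPair a b := by
  have h₂ : 2 < exp ((a - 2 * b) / 2) := two_lt_exp_half_of_four_mul_exp_neg_lt (by rwa [neg_sub])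
  have hab : 0 < (a - 2 * b) / 2 := one_lt_exp_iff.1 (by linarith)
  refine ⟨ha, hb, ?_⟩
  have hsinh : 0 < sinh (a / 2) := sinh_pos_iff.2 (by linarith)
  calc 2 * sinh (a / 2) < exp ((a - 2 * b) / 2) * sinh (a / 2) := by gcongr
    _ ≤ sinh (a / 2 + (a - 2 * b) / 2) := exp_mul_sinh_le_sinh_add _ hab.le
    _ = sinh (a - b) := by ring_nf

noncomputable def sinhHalfDist (z w : ℍ) : ℝ := sinh (dist z w / 2)

local notation "σ" => sinhHalfDist

lemma sinhHalfDist_comm (z w : ℍ) : σ z w = σ w z := by rw [sinhHalfDist, dist_comm]; rfl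

lemma sinhHalfDist_self (z : ℍ) : σ z z = 0 := by simp [sinhHalfDist]

lemma sinhHalfDist_nonneg (z w : ℍ) : 0 ≤ σ z w := sinh_nonneg_iff.2 (by positivity)

lemma sinhHalfDist_le_sinhHalfDist {z w z' w' : ℍ} :
    σ z w ≤ σ z' w' ↔ dist z w ≤ dist z' w' := by
  rw [sinhHalfDist, sinhHalfDist, sinh_le_sinh]; constructor <;> intro h <;> linarith

/-- Ptolemy's inequality for `σ = sinh (d / 2)`: in `ℍ` this is the Euclidean Ptolemy inequality in
`ℂ` divided by `4 √(Im a Im b Im c Im d)`. -/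
lemma sinhHalfDist_ptolemy (a b c d : ℍ) :
    σ a c * σ b d ≤ σ a b * σ c d + σ b c * σ a d := by
  set r : ℍ → ℝ := fun z => (√z.im)⁻¹
  have hσ (z w : ℍ) : σ z w = dist (z : ℂ) w * (r z * r w) / 2 := by
    rw [sinhHalfDist, sinh_half_dist, sqrt_mul z.im_pos.le]
    ring
  have hr : 0 ≤ r a * r b * r c * r d / 4 := by positivity
  simp only [hσ]
  calc _ = dist (a : ℂ) c * dist (b : ℂ) d * (r a * r b * r c * r d / 4) := by ring
    _ ≤ (dist (a : ℂ) b * dist (c : ℂ) d + dist (b : ℂ) c * dist (a : ℂ) d) *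
          (r a * r b * r c * r d / 4) := by
        gcongr; exact EuclideanGeometry.mul_dist_le_mul_dist_add_mul_dist (a : ℂ) b c d
    _ = _ := by ring

lemma gromov_nonneg (x y z : ℍ) : 0 ≤ gromov x y z := by
  have := dist_triangle x z y
  unfold gromov; linarith

lemma gromov_comm (x y z : ℍ) : gromov x y z = gromov y x z := by
  unfold gromov; rw [dist_comm x z, dist_comm z y, dist_comm x y]; ring

lemma dist_eq_dist_add_dist_sub_two_mul_gromov (x y z : ℍ) :
    dist x y = dist x z + dist z y - 2 * gromov x y z := by
  unfold gromov; ring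

lemma exp_mul_sinhHalfDist_le {x y z : ℍ} {t : ℝ} (ht₀ : 0 ≤ t)
    (ht : t ≤ dist y z - 2 * gromov x z y) : exp (t / 2) * σ x y ≤ σ x z := by
  have hxz := dist_eq_dist_add_dist_sub_two_mul_gromov x z y
  calc exp (t / 2) * σ x y ≤ sinh (dist x y / 2 + t / 2) := exp_mul_sinh_le_sinh_add _ (by linarith)
    _ ≤ σ x z := sinh_le_sinh.2 (by linarith)

lemma sinhHalfDist_cross_bounds {w p q r : ℍ} {ε : ℝ} (hε : 2 * ε ≤ 1)
    (h : (1 - 2 * ε) * (σ w p * σ q r) ≤ ε * (σ w q * σ p r)) :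
    (1 - 3 * ε) * (σ w q * σ p r) ≤ (1 - 2 * ε) * (σ w r * σ p q) ∧
      (1 - 2 * ε) * (σ w r * σ p q) ≤ (1 - ε) * (σ w q * σ p r) := by
  have h₁ := mul_le_mul_of_nonneg_left (sinhHalfDist_ptolemy w p q r) (by linarith : 0 ≤ 1 - 2 * ε)
  have h₂ := mul_le_mul_of_nonneg_left (sinhHalfDist_ptolemy w p r q) (by linarith : 0 ≤ 1 - 2 * ε)
  rw [sinhHalfDist_comm r q] at h₂
  constructor <;> linarith

lemma two_mul_lt_of_exp_sub_le {a b ε : ℝ} (hε : exp (2 * b - a) ≤ ε) (hε₄ : 4 * ε ≤ 1) :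
    2 * b < a := by
  linarith [exp_lt_one_iff.1 (by linarith : exp (2 * b - a) < 1)]

namespace GoodChain

variable {a b ε : ℝ} {n : ℕ} {x : ℕ → ℍ}

lemma le_dist (hx : GoodChain a b n x) {k : ℕ} (hk : k < n) : a ≤ dist (x k) (x (k + 1)) := by
  rw [dist_comm]; exact hx.1 k hk

lemma gromov_le (hx : GoodChain a b n x) {k : ℕ} (hk : k + 2 ≤ n) :
    gromov (x k) (x (k + 2)) (x (k + 1)) ≤ b := by
  simpa using hx.2 (k + 1) (by omega) (by omega)

lemma exp_mul_sinhHalfDist_le_left (hx : GoodChain a b n x) (hab : 2 * b ≤ a) {k : ℕ}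
    (hk : k + 2 ≤ n) : exp ((a - 2 * b) / 2) * σ (x k) (x (k + 1)) ≤ σ (x k) (x (k + 2)) :=
  exp_mul_sinhHalfDist_le (by linarith)
    (by linarith [hx.le_dist (k := k + 1) (by omega), hx.gromov_le hk])

lemma exp_mul_sinhHalfDist_le_right (hx : GoodChain a b n x) (hab : 2 * b ≤ a) {k : ℕ}
    (hk : k + 2 ≤ n) : exp ((a - 2 * b) / 2) * σ (x (k + 1)) (x (k + 2)) ≤ σ (x k) (x (k + 2)) := by
  rw [sinhHalfDist_comm, sinhHalfDist_comm (x k)]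
  refine exp_mul_sinhHalfDist_le (by linarith) ?_
  rw [dist_comm, gromov_comm]
  linarith [hx.le_dist (k := k) (by omega), hx.gromov_le hk]

lemma two_mul_sinhHalfDist_le (hx : GoodChain a b n x) (hε : exp (2 * b - a) ≤ ε)
    (hε₄ : 4 * ε ≤ 1) {k : ℕ} (hk : k + 2 ≤ n) : 2 * σ (x k) (x (k + 1)) ≤ σ (x k) (x (k + 2)) := by
  have h₂ : 2 ≤ exp ((a - 2 * b) / 2) :=
    two_le_exp_half_of_four_mul_exp_neg_le (by rw [neg_sub]; linarith)
  calc 2 * σ (x k) (x (k + 1)) ≤ exp ((a - 2 * b) / 2) * σ (x k) (x (k + 1)) := by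
        gcongr; exact sinhHalfDist_nonneg _ _
    _ ≤ σ (x k) (x (k + 2)) :=
        hx.exp_mul_sinhHalfDist_le_left (two_mul_lt_of_exp_sub_le hε hε₄).le hk

lemma sinhHalfDist_mul_le (hx : GoodChain a b n x) (hε : exp (2 * b - a) ≤ ε) (hε₄ : 4 * ε ≤ 1)
    {k : ℕ} (hk : k + 3 ≤ n) :
    σ (x k) (x (k + 1)) * σ (x (k + 2)) (x (k + 3)) ≤
      ε * (σ (x k) (x (k + 2)) * σ (x (k + 1)) (x (k + 3))) := by
  have hab := (two_mul_lt_of_exp_sub_le hε hε₄).le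
  have hexp : exp (2 * b - a) * exp ((a - 2 * b) / 2) ^ 2 = 1 := by
    rw [sq, ← exp_add, ← exp_add, show 2 * b - a + ((a - 2 * b) / 2 + (a - 2 * b) / 2) = 0 by ring,
      exp_zero]
  have hleft := hx.exp_mul_sinhHalfDist_le_left hab (k := k) (by omega)
  have hright : exp ((a - 2 * b) / 2) * σ (x (k + 2)) (x (k + 3)) ≤ σ (x (k + 1)) (x (k + 3)) :=
    hx.exp_mul_sinhHalfDist_le_right hab (k := k + 1) (by omega)
  have hprod := mul_le_mul hleft hright
    (mul_nonneg (exp_pos _).le (sinhHalfDist_nonneg _ _)) (sinhHalfDist_nonneg _ _)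
  calc σ (x k) (x (k + 1)) * σ (x (k + 2)) (x (k + 3))
      = exp (2 * b - a) * ((exp ((a - 2 * b) / 2) * σ (x k) (x (k + 1))) *
          (exp ((a - 2 * b) / 2) * σ (x (k + 2)) (x (k + 3)))) := by
        rw [← one_mul (_ * _), ← hexp]; ring
    _ ≤ exp (2 * b - a) * (σ (x k) (x (k + 2)) * σ (x (k + 1)) (x (k + 3))) :=
        mul_le_mul_of_nonneg_left hprod (exp_pos _).le
    _ ≤ ε * (σ (x k) (x (k + 2)) * σ (x (k + 1)) (x (k + 3))) :=
        mul_le_mul_of_nonneg_right hε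
          (mul_nonneg (sinhHalfDist_nonneg _ _) (sinhHalfDist_nonneg _ _))

lemma sinhHalfDist_pos (hx : GoodChain a b n x) (hε : exp (2 * b - a) ≤ ε) (hε₄ : 4 * ε ≤ 1)
    {k : ℕ} (hk : k + 2 ≤ n) : 0 < σ (x k) (x (k + 1)) := by
  have hb : 0 ≤ b := (gromov_nonneg _ _ _).trans (hx.gromov_le hk)
  exact sinh_pos_iff.2
    (by linarith [two_mul_lt_of_exp_sub_le hε hε₄, hx.le_dist (k := k) (by omega)])

/-- In the inductive step, `ε ≤ 1/4` is exactly what makes `(1 - 2ε)² ≤ 1 - 3ε`. -/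
lemma cross_le (hx : GoodChain a b n x) (hε : exp (2 * b - a) ≤ ε) (hε₄ : 4 * ε ≤ 1) :
    ∀ k, k + 2 ≤ n → (1 - 2 * ε) * (σ (x 0) (x k) * σ (x (k + 1)) (x (k + 2))) ≤
      ε * (σ (x 0) (x (k + 1)) * σ (x k) (x (k + 2))) := by
  have hε₀ : 0 ≤ ε := (exp_pos _).le.trans hε
  intro k hk
  induction k with
  | zero =>
    rw [sinhHalfDist_self, zero_mul, mul_zero]
    exact mul_nonneg hε₀ (mul_nonneg (sinhHalfDist_nonneg _ _) (sinhHalfDist_nonneg _ _))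
  | succ k ih =>
    have hstep := (sinhHalfDist_cross_bounds (by linarith) (ih (by omega))).1
    have hY : (1 - 2 * ε) * (σ (x 0) (x (k + 1)) * σ (x k) (x (k + 2))) ≤
        σ (x 0) (x (k + 2)) * σ (x k) (x (k + 1)) := by
      refine le_of_mul_le_mul_left ?_ (by linarith : 0 < 1 - 2 * ε)
      have hX := mul_nonneg (sinhHalfDist_nonneg (x 0) (x (k + 1)))
        (sinhHalfDist_nonneg (x k) (x (k + 2)))
      nlinarith [mul_nonneg hX (mul_nonneg hε₀ (by linarith : 0 ≤ 1 - 4 * ε))]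
    refine le_of_mul_le_mul_right ?_ (hx.sinhHalfDist_pos hε hε₄ (k := k) (by omega))
    have hσ₀ := (mul_nonneg (by linarith) (sinhHalfDist_nonneg (x 0) (x (k + 1))) :
      0 ≤ (1 - 2 * ε) * σ (x 0) (x (k + 1)))
    calc (1 - 2 * ε) * (σ (x 0) (x (k + 1)) * σ (x (k + 2)) (x (k + 3))) * σ (x k) (x (k + 1))
        = (1 - 2 * ε) * σ (x 0) (x (k + 1)) *
          (σ (x k) (x (k + 1)) * σ (x (k + 2)) (x (k + 3))) := by ring
      _ ≤ (1 - 2 * ε) * σ (x 0) (x (k + 1)) *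
          (ε * (σ (x k) (x (k + 2)) * σ (x (k + 1)) (x (k + 3)))) :=
          mul_le_mul_of_nonneg_left (hx.sinhHalfDist_mul_le hε hε₄ hk) hσ₀
      _ = ε * σ (x (k + 1)) (x (k + 3)) *
          ((1 - 2 * ε) * (σ (x 0) (x (k + 1)) * σ (x k) (x (k + 2)))) := by ring
      _ ≤ ε * σ (x (k + 1)) (x (k + 3)) * (σ (x 0) (x (k + 2)) * σ (x k) (x (k + 1))) := by
          gcongr; exact mul_nonneg hε₀ (sinhHalfDist_nonneg _ _)
      _ = ε * (σ (x 0) (x (k + 2)) * σ (x (k + 1)) (x (k + 3))) * σ (x k) (x (k + 1)) := by ring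

lemma sinhHalfDist_zero_le_succ (hx : GoodChain a b n x) (hε : exp (2 * b - a) ≤ ε)
    (hε₄ : 4 * ε ≤ 1) {k : ℕ} (hk : k + 2 ≤ n) : σ (x 0) (x (k + 1)) ≤ σ (x 0) (x (k + 2)) := by
  have hstep := (sinhHalfDist_cross_bounds (by linarith) (hx.cross_le hε hε₄ k hk)).1
  have hjump := hx.two_mul_sinhHalfDist_le hε hε₄ hk
  have he := hx.sinhHalfDist_pos hε hε₄ hk
  have h₀ := sinhHalfDist_nonneg (x 0) (x (k + 1))
  refine le_of_mul_le_mul_left (a := (1 - 2 * ε) * σ (x k) (x (k + 1))) ?_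
    (mul_pos (by linarith) he)
  calc (1 - 2 * ε) * σ (x k) (x (k + 1)) * σ (x 0) (x (k + 1))
      ≤ (1 - 3 * ε) * σ (x 0) (x (k + 1)) * (2 * σ (x k) (x (k + 1))) := by
        nlinarith [mul_nonneg he.le h₀]
    _ ≤ (1 - 3 * ε) * σ (x 0) (x (k + 1)) * σ (x k) (x (k + 2)) := by
        gcongr; exact mul_nonneg (by linarith) h₀
    _ ≤ (1 - 2 * ε) * σ (x k) (x (k + 1)) * σ (x 0) (x (k + 2)) := by linarith

lemma le_dist_zero (hx : GoodChain a b n x) (hε : exp (2 * b - a) ≤ ε) (hε₄ : 4 * ε ≤ 1) :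
    ∀ k, k + 1 ≤ n → a ≤ dist (x 0) (x (k + 1)) := by
  intro k hk
  induction k with
  | zero => exact hx.le_dist (by omega)
  | succ k ih =>
    exact (ih (by omega)).trans
      (sinhHalfDist_le_sinhHalfDist.1 (hx.sinhHalfDist_zero_le_succ hε hε₄ hk))

lemma one_sub_four_mul_le_exp_gromov_sub (hx : GoodChain a b n x) (hε : exp (2 * b - a) ≤ ε)
    (hε₄ : 4 * ε ≤ 1) {k : ℕ} (hk : k + 3 ≤ n) :
    1 - 4 * ε ≤ exp (gromov (x 0) (x (k + 3)) (x (k + 2)) -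
        gromov (x (k + 1)) (x (k + 3)) (x (k + 2))) ∧
      1 - 4 * ε ≤ exp (gromov (x (k + 1)) (x (k + 3)) (x (k + 2)) -
        gromov (x 0) (x (k + 3)) (x (k + 2))) := by
  have hb : 0 ≤ b := (gromov_nonneg _ _ _).trans (hx.gromov_le (k := k) (by omega))
  have hab := two_mul_lt_of_exp_sub_le hε hε₄
  have hexp {d : ℝ} (hd : a ≤ d) : exp (-d) ≤ ε := (exp_le_exp.2 (by linarith)).trans hε
  have hg := hx.gromov_le (k := k + 1) (by omega)
  have hpq := hx.le_dist (k := k + 1) (by omega)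
  have hqr := hx.le_dist (k := k + 2) (by omega)
  have hpr := dist_eq_dist_add_dist_sub_two_mul_gromov (x (k + 1)) (x (k + 3)) (x (k + 2))
  have hwr := dist_eq_dist_add_dist_sub_two_mul_gromov (x 0) (x (k + 3)) (x (k + 2))
  obtain ⟨h₁, h₂⟩ := sinhHalfDist_cross_bounds (by linarith) (hx.cross_le hε hε₄ (k + 1) hk)
  obtain ⟨hδ, hδ'⟩ := one_sub_four_mul_le_exp_of_sinh_half hε₄
    (hexp (hx.le_dist_zero hε hε₄ (k + 1) (by omega))) (hexp (by linarith))
    (hexp (hx.le_dist_zero hε hε₄ (k + 2) hk)) (hexp hpq) h₁ h₂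
  constructor
  · convert hδ' using 2; linarith
  · convert hδ using 2; linarith

end GoodChain

lemma tension_add_two (m : ℕ) (x : ℕ → ℍ) :
    tension (m + 2) x = 2 * ∑ j ∈ range m,
      (gromov (x 0) (x (j + 3)) (x (j + 2)) - gromov (x (j + 1)) (x (j + 3)) (x (j + 2))) := by
  induction m with
  | zero => simp [tension]
  | succ m ih =>
    have h₁ := dist_eq_dist_add_dist_sub_two_mul_gromov (x (m + 1)) (x (m + 3)) (x (m + 2))
    have h₂ := dist_eq_dist_add_dist_sub_two_mul_gromov (x 0) (x (m + 3)) (x (m + 2))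
    simp only [tension, show m + 1 + 2 - 1 = m + 1 + 1 by omega,
      show m + 1 + 2 - 2 = m + 1 by omega, show m + 2 - 1 = m + 1 by omega,
      show m + 2 - 2 = m by omega, sum_range_succ] at ih ⊢
    linarith

/-- If `c > 1` and `a, b ≥ 0` satisfy `a − 2b > log 4 + log(c/(c−1))`, then `(a,b)` is a
good pair and every `(a,b)`-good chain `x 0, …, x n` (`n ≥ 2`) in `ℍ²` satisfies
`|τ(x 0,…,x n)| ≤ 8c·(n−2)·e^{2b−a}`. -/
theorem avalanche_principle_exponential_form (c a b : ℝ) (hc : 1 < c) (ha : 0 ≤ a) (hb : 0 ≤ b)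
    (h : a - 2 * b > Real.log 4 + Real.log (c / (c - 1))) :
    GoodPair a b ∧
      ∀ n : ℕ, 2 ≤ n → ∀ x : ℕ → UpperHalfPlane, GoodChain a b n x →
        |tension n x| ≤ 8 * c * ((n : ℝ) - 2) * Real.exp (2 * b - a) := by
  set ε := exp (2 * b - a)
  have hcε : 4 * c * ε < c - 1 := four_mul_mul_exp_lt_sub_one hc h
  have hε₄ : 4 * ε < 1 := by nlinarith
  refine ⟨goodPair_of_four_mul_exp_lt ha hb hε₄, fun n hn x hx => ?_⟩
  obtain ⟨m, rfl⟩ := Nat.exists_eq_add_of_le' hn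
  have hstep (j : ℕ) (hj : j ∈ range m) :
      |gromov (x 0) (x (j + 3)) (x (j + 2)) - gromov (x (j + 1)) (x (j + 3)) (x (j + 2))|
        ≤ 4 * c * ε := by
    have hε₀ : 0 < ε := exp_pos _
    obtain ⟨h₁, h₂⟩ := hx.one_sub_four_mul_le_exp_gromov_sub le_rfl hε₄.le
      (k := j) (by rw [mem_range] at hj; omega)
    exact abs_sub_le_of_le_exp_sub (by positivity) (by nlinarith) h₁ h₂
  rw [tension_add_two, abs_mul, abs_two]
  calc 2 * |∑ j ∈ range m, _| ≤ 2 * ∑ j ∈ range m, 4 * c * ε := by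
        gcongr; exact (abs_sum_le_sum_abs _ _).trans (sum_le_sum hstep)
    _ = 8 * c * ((↑(m + 2) : ℝ) - 2) * ε := by
        rw [sum_const, card_range, nsmul_eq_mul]; push_cast; ring
end

section
/- Let (a,b) be a good pair with translation number λ and curvature angle φ, and let x₀,x₁,x₂ be an (a,b)-good chain in the hyperbolic upper half-plane ℍ². Let 0 < t₀ ≤ t₁ ≤ t₂ be real numbers and set y_j = t_j·e^{iφ} ∈ ℍ² for j = 0,1,2, and suppose d(y₀,y₁) = d(x₀,x₁) and d(y₁,y₂) = d(x₁,x₂). Then d(x₀,x₂) ≥ d(y₀,y₂). -/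
open UpperHalfPlane Real Filter

/-
Put `Δ(d) = 2 arsinh (sin φ · sinh (d / 2))`. For two points `t e^{iφ}`, `t' e^{iφ}` with
`t ≤ t'` at distance `d` one has `Δ(d) = log t' - log t`, so
`Δ(d(y₀,y₂)) = Δ(d(x₀,x₁)) + Δ(d(x₁,x₂))`.
Since `sin φ ≤ 1`, `Δ` is convex on `[0, ∞)`, so `Δ(u) + Δ(v) - Δ(u + v - 2b)` decreases in
`u, v ≥ a`; at `u = v = a` it vanishes, because the choice of `λ` and `φ` gives `Δ(a) = log λ`
and `Δ(2a - 2b) = 2 log λ`. The Gromov product bound `d(x₀,x₂) ≥ d(x₀,x₁) + d(x₁,x₂) - 2b` and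
monotonicity of `Δ` finish the proof.
-/

theorem GoodPair.half_lt_sub {a b : ℝ} (h : GoodPair a b) : a / 2 < a - b := by
  obtain ⟨ha, -, hsinh⟩ := h
  have : 0 ≤ sinh (a / 2) := sinh_nonneg_iff.2 (by linarith)
  exact sinh_lt_sinh.1 (by linarith)

theorem ConvexOn.add_le_add_of_le {s : Set ℝ} {f : ℝ → ℝ} (hf : ConvexOn ℝ s f) {x y c : ℝ}
    (hx : x ∈ s) (hyc : y + c ∈ s) (hxy : x ≤ y) (hc : 0 ≤ c) :
    f (x + c) + f y ≤ f x + f (y + c) := by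
  rcases (hxy.trans (le_add_of_nonneg_right hc)).eq_or_lt with hdeg | hlt
  · obtain rfl : y = x := by linarith
    obtain rfl : c = 0 := by linarith
    simp
  -- `x + c` and `y` are the two convex combinations of `x` and `y + c` with swapped weights.
  obtain ⟨d, hd_def⟩ : ∃ d, d = y + c - x := ⟨_, rfl⟩
  have hd : 0 < d := by linarith
  have hxd : 0 ≤ (y - x) / d := div_nonneg (by linarith) hd.le
  have hcd : 0 ≤ c / d := div_nonneg hc hd.le
  have hsum : (y - x) / d + c / d = 1 := by field_simp; linarith
  have hleft : f ((y - x) / d * x + c / d * (y + c)) ≤ (y - x) / d * f x + c / d * f (y + c) :=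
    hf.2 hx hyc hxd hcd hsum
  have hright : f (c / d * x + (y - x) / d * (y + c)) ≤ c / d * f x + (y - x) / d * f (y + c) :=
    hf.2 hx hyc hcd hxd (by linarith)
  rw [show (y - x) / d * x + c / d * (y + c) = x + c by field_simp; rw [hd_def]; ring] at hleft
  rw [show c / d * x + (y - x) / d * (y + c) = y by field_simp; rw [hd_def]; ring] at hright
  linear_combination hleft + hright + (f x + f (y + c)) * hsum

theorem ConvexOn.add_sub_le_two_mul_sub {f : ℝ → ℝ} (hf : ConvexOn ℝ (Set.Ici 0) f)
    {a c x y : ℝ} (ha : 0 ≤ a) (hca : c ≤ a) (hax : a ≤ x) (hay : a ≤ y) :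
    f x + f y - f (x + y - c) ≤ 2 * f a - f (2 * a - c) := by
  have h₁ := hf.add_le_add_of_le (x := a) (y := x) (c := y - c) ha
    (show (0 : ℝ) ≤ x + (y - c) by linarith) hax (by linarith)
  have h₂ := hf.add_le_add_of_le (x := a) (y := y) (c := a - c) ha
    (show (0 : ℝ) ≤ y + (a - c) by linarith) hay (by linarith)
  rw [show a + (y - c) = y + (a - c) by ring, show x + (y - c) = x + y - c by ring] at h₁
  rw [show a + (a - c) = 2 * a - c by ring] at h₂
  linarith

theorem sinh_half_log_sub_log {t t' : ℝ} (ht : 0 < t) (ht' : 0 < t') :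
    sinh ((log t' - log t) / 2) = (t' - t) / (2 * √(t * t')) := by
  have hu := sqrt_pos.2 ht
  have hv := sqrt_pos.2 ht'
  have hlog : (log t' - log t) / 2 = log (√t' / √t) := by
    rw [log_div hv.ne' hu.ne', log_sqrt ht.le, log_sqrt ht'.le]; ring
  rw [hlog, sinh_log (div_pos hv hu), sqrt_mul ht.le, ← sq_sqrt ht.le, ← sq_sqrt ht'.le,
    sqrt_sq hu.le, sqrt_sq hv.le]
  field_simp

noncomputable def distort (s d : ℝ) : ℝ := 2 * arsinh (s * sinh (d / 2))

noncomputable def distortDeriv (s d : ℝ) : ℝ := s * cosh (d / 2) / √(1 + (s * sinh (d / 2)) ^ 2)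

theorem hasDerivAt_distort (s d : ℝ) : HasDerivAt (distort s) (distortDeriv s d) d := by
  have hinner : HasDerivAt (fun d ↦ s * sinh (d / 2)) (s * (cosh (d / 2) * (1 / 2))) d :=
    ((hasDerivAt_sinh _).comp d ((hasDerivAt_id d).div_const 2)).const_mul s
  refine (((hasDerivAt_arsinh _).comp d hinner).const_mul 2).congr_deriv ?_
  have : 0 < √(1 + (s * sinh (d / 2)) ^ 2) := sqrt_pos.2 (by positivity)
  rw [distortDeriv]
  field_simp

theorem strictMono_distort {s : ℝ} (hs : 0 < s) : StrictMono (distort s) := fun _ _ h ↦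
  mul_lt_mul_of_pos_left (arsinh_strictMono (mul_lt_mul_of_pos_left
    (sinh_strictMono (by linarith)) hs)) two_pos

theorem distortDeriv_sq (s d : ℝ) :
    distortDeriv s d ^ 2 = 1 - (1 - s ^ 2) / (1 + (s * sinh (d / 2)) ^ 2) := by
  have : 0 < 1 + (s * sinh (d / 2)) ^ 2 := by positivity
  rw [distortDeriv, div_pow, sq_sqrt this.le, mul_pow, cosh_sq']
  field_simp
  ring

theorem monotoneOn_distortDeriv {s : ℝ} (hs0 : 0 ≤ s) (hs1 : s ≤ 1) :
    MonotoneOn (distortDeriv s) (Set.Ici 0) := by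
  intro x hx y _ hxy
  have hnn : ∀ d, 0 ≤ distortDeriv s d := fun d ↦ by unfold distortDeriv; positivity
  refine (pow_le_pow_iff_left₀ (hnn x) (hnn y) two_ne_zero).1 ?_
  rw [distortDeriv_sq, distortDeriv_sq]
  have hsinh : s * sinh (x / 2) ≤ s * sinh (y / 2) :=
    mul_le_mul_of_nonneg_left (sinh_le_sinh.2 (by linarith)) hs0
  have : 0 ≤ s * sinh (x / 2) :=
    mul_nonneg hs0 (sinh_nonneg_iff.2 (by linarith [Set.mem_Ici.1 hx]))
  gcongr
  nlinarith

theorem convexOn_distort {s : ℝ} (hs0 : 0 ≤ s) (hs1 : s ≤ 1) :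
    ConvexOn ℝ (Set.Ici 0) (distort s) := by
  have hdiff : Differentiable ℝ (distort s) := fun d ↦ (hasDerivAt_distort s d).differentiableAt
  refine MonotoneOn.convexOn_of_deriv (convex_Ici 0) hdiff.continuous.continuousOn
    hdiff.differentiableOn ?_
  rw [interior_Ici, funext fun d ↦ (hasDerivAt_distort s d).deriv]
  exact (monotoneOn_distortDeriv hs0 hs1).mono Set.Ioi_subset_Ici_self

theorem distort_two_mul_sub {s a b L : ℝ} (ha : 0 < sinh (a / 2))
    (hsinh : sinh (L / 2) = s * sinh (a / 2))
    (hcosh : cosh (L / 2) = sinh (a - b) / (2 * sinh (a / 2))) :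
    distort s (2 * a - 2 * b) = 2 * distort s a := by
  have hdouble : s * sinh (a - b) = sinh L := by
    rw [show L = 2 * (L / 2) by ring, sinh_two_mul, hsinh, hcosh]
    field_simp
  rw [distort, distort, show (2 * a - 2 * b) / 2 = a - b by ring, hdouble, ← hsinh,
    arsinh_sinh, arsinh_sinh]
  ring

theorem UpperHalfPlane.im_of_coe_eq_mul_exp {y : ℍ} {t φ : ℝ}
    (hy : (y : ℂ) = t * Complex.exp (φ * Complex.I)) : y.im = t * sin φ := by
  rw [← coe_im, hy, Complex.mul_im, Complex.exp_ofReal_mul_I_re, Complex.exp_ofReal_mul_I_im]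
  simp

theorem distort_dist_of_coe_eq_mul_exp {y y' : ℍ} {t t' φ : ℝ} (hφ : 0 < sin φ) (ht : 0 < t)
    (htt' : t ≤ t') (hy : (y : ℂ) = t * Complex.exp (φ * Complex.I))
    (hy' : (y' : ℂ) = t' * Complex.exp (φ * Complex.I)) :
    distort (sin φ) (dist y y') = log t' - log t := by
  have ht' : 0 < t' := ht.trans_le htt'
  have hdist : dist (y : ℂ) y' = t' - t := by
    rw [dist_eq_norm, hy, hy', ← sub_mul, norm_mul, Complex.norm_exp_ofReal_mul_I, mul_one,
      ← Complex.ofReal_sub, Complex.norm_real, norm_eq_abs, abs_sub_comm,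
      abs_of_nonneg (by linarith)]
  have him : √(y.im * y'.im) = √(t * t') * sin φ := by
    rw [im_of_coe_eq_mul_exp hy, im_of_coe_eq_mul_exp hy',
      show t * sin φ * (t' * sin φ) = t * t' * sin φ ^ 2 by ring,
      sqrt_mul (by positivity), sqrt_sq hφ.le]
  have hsinh : sin φ * sinh (dist y y' / 2) = sinh ((log t' - log t) / 2) := by
    rw [sinh_half_dist, hdist, him, sinh_half_log_sub_log ht ht']
    field_simp
  rw [distort, hsinh, arsinh_sinh]
  ring

theorem dist_ge_distorted_general (a b lam φ : ℝ) (hab : GoodPair a b)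
    (hlam2 : Real.cosh (Real.log lam / 2) = Real.sinh (a - b) / (2 * Real.sinh (a / 2)))
    (hφ1 : 0 < φ) (hφ2 : φ ≤ π / 2)
    (hφ3 : Real.sinh (Real.log lam / 2) = Real.sin φ * Real.sinh (a / 2))
    (x₀ x₁ x₂ : UpperHalfPlane)
    (h01 : dist x₁ x₀ ≥ a) (h12 : dist x₂ x₁ ≥ a) (hg : gromov x₀ x₂ x₁ ≤ b)
    (t₀ t₁ t₂ : ℝ) (ht₀ : 0 < t₀) (ht01 : t₀ ≤ t₁) (ht12 : t₁ ≤ t₂)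
    (y₀ y₁ y₂ : UpperHalfPlane)
    (hy₀ : (y₀ : ℂ) = (t₀ : ℂ) * Complex.exp (φ * Complex.I))
    (hy₁ : (y₁ : ℂ) = (t₁ : ℂ) * Complex.exp (φ * Complex.I))
    (hy₂ : (y₂ : ℂ) = (t₂ : ℂ) * Complex.exp (φ * Complex.I))
    (hd1 : dist y₀ y₁ = dist x₀ x₁) (hd2 : dist y₁ y₂ = dist x₁ x₂) :
    dist x₀ x₂ ≥ dist y₀ y₂ := by
  have hs : 0 < sin φ := sin_pos_of_pos_of_lt_pi hφ1 (by linarith [pi_pos])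
  have hhalf := hab.half_lt_sub
  have ha : 0 < sinh (a / 2) := sinh_pos_iff.2 (by linarith [hab.2.1])
  have hd₀ : a ≤ dist x₀ x₁ := dist_comm x₁ x₀ ▸ h01
  have hd₁ : a ≤ dist x₁ x₂ := dist_comm x₂ x₁ ▸ h12
  refine (strictMono_distort hs).le_iff_le.1 ?_
  calc distort (sin φ) (dist y₀ y₂)
      = distort (sin φ) (dist x₀ x₁) + distort (sin φ) (dist x₁ x₂) := by
        rw [← hd1, ← hd2, distort_dist_of_coe_eq_mul_exp hs ht₀ (ht01.trans ht12) hy₀ hy₂,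
          distort_dist_of_coe_eq_mul_exp hs ht₀ ht01 hy₀ hy₁,
          distort_dist_of_coe_eq_mul_exp hs (ht₀.trans_le ht01) ht12 hy₁ hy₂]
        ring
    _ ≤ distort (sin φ) (dist x₀ x₁ + dist x₁ x₂ - 2 * b) := by
        have := (convexOn_distort hs.le (sin_le_one φ)).add_sub_le_two_mul_sub
          hab.1 (by linarith) hd₀ hd₁ (c := 2 * b)
        rw [distort_two_mul_sub ha hφ3 hlam2] at this
        linarith
    _ ≤ distort (sin φ) (dist x₀ x₂) :=
        (strictMono_distort hs).monotone (by unfold gromov at hg; linarith [dist_comm x₀ x₁])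

/-- Comparison with the distorted chain (Lemma on three points): if `x₀,x₁,x₂` is an
`(a,b)`-good chain and `y₀,y₁,y₂` lie on the ray of angle `φ` (the curvature angle of
`(a,b)`) with matching consecutive distances, then `d(x₀,x₂) ≥ d(y₀,y₂)`. -/
theorem dist_ge_distorted (a b lam φ : ℝ) (hab : GoodPair a b)
    (hlam1 : 1 < lam)
    (hlam2 : Real.cosh (Real.log lam / 2) = Real.sinh (a - b) / (2 * Real.sinh (a / 2)))
    (hφ1 : 0 < φ) (hφ2 : φ ≤ π / 2)
    (hφ3 : Real.sinh (Real.log lam / 2) = Real.sin φ * Real.sinh (a / 2))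
    (x₀ x₁ x₂ : UpperHalfPlane)
    (h01 : dist x₁ x₀ ≥ a) (h12 : dist x₂ x₁ ≥ a) (hg : gromov x₀ x₂ x₁ ≤ b)
    (t₀ t₁ t₂ : ℝ) (ht₀ : 0 < t₀) (ht01 : t₀ ≤ t₁) (ht12 : t₁ ≤ t₂)
    (y₀ y₁ y₂ : UpperHalfPlane)
    (hy₀ : (y₀ : ℂ) = (t₀ : ℂ) * Complex.exp (φ * Complex.I))
    (hy₁ : (y₁ : ℂ) = (t₁ : ℂ) * Complex.exp (φ * Complex.I))
    (hy₂ : (y₂ : ℂ) = (t₂ : ℂ) * Complex.exp (φ * Complex.I))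
    (hd1 : dist y₀ y₁ = dist x₀ x₁) (hd2 : dist y₁ y₂ = dist x₁ x₂) :
    dist x₀ x₂ ≥ dist y₀ y₂ :=
  dist_ge_distorted_general a b lam φ hab hlam2 hφ1 hφ2 hφ3 x₀ x₁ x₂ h01 h12 hg t₀ t₁ t₂ ht₀ ht01
    ht12 y₀ y₁ y₂ hy₀ hy₁ hy₂ hd1 hd2
end

section
/- Let n ≥ 2 and let λ₁,…,λₙ > 1. For φ ∈ (0, π/2] define the chain x_j(φ) = (λ₁⋯λ_j)·e^{iφ} ∈ ℍ² for 0 ≤ j ≤ n (so x₀(φ) = e^{iφ}). Then the function φ ↦ τ(x₀(φ),…,xₙ(φ)) is non-increasing on (0, π/2]: if 0 < φ ≤ φ' ≤ π/2 then τ(x₀(φ'),…,xₙ(φ')) ≤ τ(x₀(φ),…,xₙ(φ)). -/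
open UpperHalfPlane Real Filter

/-!
In the log-coordinates `L j = log (λ₁⋯λ_j)`, two points of the ray `ℝ₊ e^{iφ}` at log-distance
`ℓ` are at hyperbolic distance `2 arsinh (s sinh (ℓ/2))` with `s = 1 / sin φ`, so the tension is a
function `F(s)` of `s`, and `s` decreases as `φ` grows. Differentiating in `s` replaces every
distance in the tension by `ρ_s(ℓ) = 2 sinh (ℓ/2) / √(1 + s² sinh² (ℓ/2))`, which for `s ≥ 1` is
concave on `[0, ∞)`. For a kernel with decreasing increments the tension of a monotone sequence is
nonnegative, by induction on `n`: adding the last point changes it by a difference of two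
increments of equal length. Hence `F` is nondecreasing on `[1, ∞)`.
-/

open Set

lemma sub_le_sub_of_antitoneOn_deriv {g : ℝ → ℝ} (hg : Differentiable ℝ g)
    (hg' : AntitoneOn (deriv g) (Ici 0)) {x y y' : ℝ} (hx : 0 ≤ x) (hy : 0 ≤ y) (hyy' : y ≤ y') :
    g (x + y') - g y' ≤ g (x + y) - g y := by
  have hderiv (t : ℝ) : HasDerivAt (fun z => g (x + z) - g z) (deriv g (x + t) - deriv g t) t :=
    ((hg (x + t)).hasDerivAt.comp_const_add x t).sub (hg t).hasDerivAt
  have hanti : AntitoneOn (fun z => g (x + z) - g z) (Ici 0) := by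
    refine antitoneOn_of_hasDerivWithinAt_nonpos (convex_Ici 0)
      (HasDerivAt.continuousOn fun t _ => hderiv t) (fun t _ => (hderiv t).hasDerivWithinAt) ?_
    intro t ht
    rw [interior_Ici] at ht
    have := hg' (mem_Ici.2 (le_of_lt ht)) (mem_Ici.2 (by linarith [mem_Ioi.1 ht]))
      (le_add_of_nonneg_left hx)
    linarith
  exact hanti (mem_Ici.2 hy) (mem_Ici.2 (hy.trans hyy')) hyy'

lemma antitoneOn_one_add_div_one_add_mul_cube {a : ℝ} (ha : 1 ≤ a) :
    AntitoneOn (fun p => (1 + p) / (1 + a * p) ^ 3) (Ici 0) := by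
  intro u hu v hv huv
  rw [mem_Ici] at hu hv
  rw [div_le_div_iff₀ (by positivity) (by positivity)]
  have hlin : (1 + v) * (1 + a * u) ≤ (1 + u) * (1 + a * v) := by
    nlinarith [mul_nonneg (sub_nonneg.2 ha) (sub_nonneg.2 huv)]
  have hsq : (1 + a * u) ^ 2 ≤ (1 + a * v) ^ 2 := by gcongr
  calc (1 + v) * (1 + a * u) ^ 3 = (1 + v) * (1 + a * u) * (1 + a * u) ^ 2 := by ring
    _ ≤ (1 + u) * (1 + a * v) * (1 + a * v) ^ 2 :=
        mul_le_mul hlin hsq (by positivity) (by positivity)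
    _ = (1 + u) * (1 + a * v) ^ 3 := by ring

/-- Distance in `ℍ` between two points of the ray `ℝ₊ e^{iφ}` whose moduli have logarithms
`ℓ` apart, written in terms of `s = 1 / sin φ`. -/
noncomputable def rayDist (s ℓ : ℝ) : ℝ :=
  2 * arsinh (s * sinh (ℓ / 2))

noncomputable def rayDistDeriv (s ℓ : ℝ) : ℝ :=
  2 * sinh (ℓ / 2) / √(1 + (s * sinh (ℓ / 2)) ^ 2)

lemma hasDerivAt_rayDist (s ℓ : ℝ) :
    HasDerivAt (rayDist · ℓ) (rayDistDeriv s ℓ) s := by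
  have h := ((hasDerivAt_arsinh (s * sinh (ℓ / 2))).comp s
    ((hasDerivAt_id s).mul_const (sinh (ℓ / 2)))).const_mul 2
  refine h.congr_deriv ?_
  rw [rayDistDeriv, one_mul]
  ring

lemma hasDerivAt_rayDistDeriv (s ℓ : ℝ) :
    HasDerivAt (rayDistDeriv s)
      (cosh (ℓ / 2) / ((1 + (s * sinh (ℓ / 2)) ^ 2) * √(1 + (s * sinh (ℓ / 2)) ^ 2))) ℓ := by
  have hE : 0 < 1 + (s * sinh (ℓ / 2)) ^ 2 := by positivity
  have hsinh : HasDerivAt (fun t => sinh (t / 2)) (cosh (ℓ / 2) / 2) ℓ := by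
    simpa [div_eq_mul_inv] using ((hasDerivAt_id ℓ).div_const 2).sinh
  have hden := (((hsinh.const_mul s).fun_pow 2).const_add 1).sqrt hE.ne'
  refine ((hsinh.const_mul 2).div hden (sqrt_pos.2 hE).ne').congr_deriv ?_
  have hsq := sq_sqrt hE.le
  have hr := sqrt_pos.2 hE
  generalize √(1 + (s * sinh (ℓ / 2)) ^ 2) = r at hsq hr ⊢
  field_simp
  linear_combination 2 * s ^ 2 * sinh (ℓ / 2) ^ 2 * hsq

lemma antitoneOn_deriv_rayDistDeriv {s : ℝ} (hs : 1 ≤ s) :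
    AntitoneOn (deriv (rayDistDeriv s)) (Ici 0) := by
  have hsq (ℓ : ℝ) : deriv (rayDistDeriv s) ℓ ^ 2 =
      (1 + sinh (ℓ / 2) ^ 2) / (1 + s ^ 2 * sinh (ℓ / 2) ^ 2) ^ 3 := by
    rw [(hasDerivAt_rayDistDeriv s ℓ).deriv, div_pow, mul_pow, sq_sqrt (by positivity), cosh_sq']
    ring
  have hpos (ℓ : ℝ) : 0 ≤ deriv (rayDistDeriv s) ℓ := by
    rw [(hasDerivAt_rayDistDeriv s ℓ).deriv]
    positivity
  intro u hu v hv huv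
  rw [mem_Ici] at hu hv
  rw [← sq_le_sq₀ (hpos v) (hpos u), hsq, hsq]
  have hsinh : sinh (u / 2) ≤ sinh (v / 2) := sinh_le_sinh.2 (by linarith)
  have hsinh_nonneg : 0 ≤ sinh (u / 2) := sinh_nonneg_iff.2 (by linarith)
  exact antitoneOn_one_add_div_one_add_mul_cube (one_le_pow₀ hs) (mem_Ici.2 (sq_nonneg _))
    (mem_Ici.2 (sq_nonneg _))
    (pow_le_pow_left₀ hsinh_nonneg hsinh 2)

lemma dist_eq_rayDist {z w : ℍ} {a b φ : ℝ} (hab : a ≤ b) (hφ : 0 < sin φ)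
    (hz : (z : ℂ) = (exp a : ℂ) * Complex.exp (φ * Complex.I))
    (hw : (w : ℂ) = (exp b : ℂ) * Complex.exp (φ * Complex.I)) :
    dist z w = rayDist (sin φ)⁻¹ (b - a) := by
  have him {p : ℝ} {ζ : ℍ} (h : (ζ : ℂ) = (p : ℂ) * Complex.exp (φ * Complex.I)) :
      ζ.im = p * sin φ := by
    rw [← coe_im, h, Complex.exp_mul_I]
    simp [← Complex.ofReal_cos, ← Complex.ofReal_sin]
  have hdist : dist (z : ℂ) w = exp b - exp a := by
    rw [Complex.dist_eq, hz, hw, ← sub_mul, norm_mul, Complex.norm_exp_ofReal_mul_I, mul_one,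
      ← Complex.ofReal_sub, Complex.norm_real, Real.norm_eq_abs,
      abs_of_nonpos (by linarith [exp_le_exp.2 hab]), neg_sub]
  have hsqrt : √(z.im * w.im) = exp ((a + b) / 2) * sin φ := by
    have : exp ((a + b) / 2) ^ 2 = exp a * exp b := by rw [sq, ← exp_add, add_halves, exp_add]
    rw [him hz, him hw, ← sqrt_sq (by positivity : 0 ≤ exp ((a + b) / 2) * sin φ), mul_pow, this]
    ring_nf
  have hexp : exp b - exp a = 2 * exp ((a + b) / 2) * sinh ((b - a) / 2) := by
    have hb : exp b = exp ((a + b) / 2) * exp ((b - a) / 2) := by rw [← exp_add]; ring_nf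
    have ha : exp a = exp ((a + b) / 2) * exp (-((b - a) / 2)) := by rw [← exp_add]; ring_nf
    rw [hb, ha, sinh_eq]
    ring
  rw [UpperHalfPlane.dist_eq, hdist, hsqrt, hexp, rayDist]
  field_simp

noncomputable def lineTension (g : ℝ → ℝ) (n : ℕ) (L : ℕ → ℝ) : ℝ :=
  (∑ j ∈ Finset.range (n - 1), g (L (j + 2) - L j))
    - (∑ j ∈ Finset.range (n - 2), g (L (j + 2) - L (j + 1)))
    - g (L n - L 0)

lemma tension_eq_lineTension {n : ℕ} {x : ℕ → ℍ} {g : ℝ → ℝ} {L : ℕ → ℝ}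
    (h : ∀ i j, i ≤ j → j ≤ n → dist (x i) (x j) = g (L j - L i)) :
    tension n x = lineTension g n L := by
  rw [tension, lineTension, h 0 n n.zero_le le_rfl]
  congr 2 <;> refine Finset.sum_congr rfl fun j hj => h _ _ (by omega) ?_ <;>
    (rw [Finset.mem_range] at hj; omega)

lemma lineTension_succ (g : ℝ → ℝ) {n : ℕ} (hn : 2 ≤ n) (L : ℕ → ℝ) :
    lineTension g (n + 1) L = lineTension g n L
      + (g (L (n + 1) - L (n - 1)) - g (L n - L (n - 1)))
      - (g (L (n + 1) - L 0) - g (L n - L 0)) := by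
  obtain ⟨m, rfl⟩ : ∃ m, n = m + 2 := ⟨n - 2, by omega⟩
  simp only [lineTension, show m + 2 + 1 - 1 = m + 1 + 1 by omega, show m + 2 - 1 = m + 1 by omega,
    show m + 2 + 1 - 2 = m + 1 by omega, Nat.add_sub_cancel, Finset.sum_range_succ]
  ring_nf

lemma lineTension_nonneg {g : ℝ → ℝ} {n : ℕ} (hn : 2 ≤ n) {L : ℕ → ℝ}
    (hL : MonotoneOn L (Iic n))
    (hg : ∀ x y y', 0 ≤ x → 0 ≤ y → y ≤ y' → g (x + y') - g y' ≤ g (x + y) - g y) :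
    0 ≤ lineTension g n L := by
  induction n, hn using Nat.le_induction with
  | base => simp [lineTension]
  | succ n hn ih =>
    have hL' {i j : ℕ} (hij : i ≤ j) (hj : j ≤ n + 1) : 0 ≤ L j - L i :=
      sub_nonneg.2 (hL (mem_Iic.2 (by omega)) (mem_Iic.2 hj) hij)
    have hstep := hg (L (n + 1) - L n) (L n - L (n - 1)) (L n - L 0)
      (hL' (by omega) le_rfl) (hL' (by omega) (by omega))
      (by linarith [hL' (Nat.zero_le (n - 1)) (by omega : n - 1 ≤ n + 1)])
    rw [lineTension_succ g hn]
    ring_nf at hstep ⊢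
    linarith [ih (hL.mono (Iic_subset_Iic.2 n.le_succ))]

lemma hasDerivAt_lineTension {f f' : ℝ → ℝ → ℝ} {s : ℝ} (hf : ∀ ℓ, HasDerivAt (f · ℓ) (f' s ℓ) s)
    (n : ℕ) (L : ℕ → ℝ) :
    HasDerivAt (fun s => lineTension (f s) n L) (lineTension (f' s) n L) s :=
  ((HasDerivAt.fun_sum fun _ _ => hf _).sub (HasDerivAt.fun_sum fun _ _ => hf _)).sub (hf _)

lemma monotoneOn_lineTension_rayDist {n : ℕ} (hn : 2 ≤ n) {L : ℕ → ℝ}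
    (hL : MonotoneOn L (Iic n)) :
    MonotoneOn (fun s => lineTension (rayDist s) n L) (Ici 1) := by
  have hderiv (s : ℝ) := hasDerivAt_lineTension (hasDerivAt_rayDist s) n L
  refine monotoneOn_of_hasDerivWithinAt_nonneg (convex_Ici 1)
    (HasDerivAt.continuousOn fun s _ => hderiv s) (fun s _ => (hderiv s).hasDerivWithinAt) ?_
  intro s hs
  rw [interior_Ici] at hs
  exact lineTension_nonneg hn hL fun x y y' hx hy hyy' =>
    sub_le_sub_of_antitoneOn_deriv (fun ℓ => (hasDerivAt_rayDistDeriv s ℓ).differentiableAt)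
      (antitoneOn_deriv_rayDistDeriv (le_of_lt hs)) hx hy hyy'

lemma one_le_prod_Icc {lam : ℕ → ℝ} {n : ℕ} (hlam : ∀ j, 1 ≤ j → j ≤ n → 1 ≤ lam j) {j : ℕ}
    (hj : j ≤ n) : 1 ≤ ∏ i ∈ Finset.Icc 1 j, lam i :=
  Finset.one_le_prod fun i hi => hlam i (Finset.mem_Icc.1 hi).1 ((Finset.mem_Icc.1 hi).2.trans hj)

lemma monotoneOn_log_prod_Icc {lam : ℕ → ℝ} {n : ℕ} (hlam : ∀ j, 1 ≤ j → j ≤ n → 1 ≤ lam j) :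
    MonotoneOn (fun j => log (∏ i ∈ Finset.Icc 1 j, lam i)) (Iic n) := by
  refine monotoneOn_of_le_succ ordConnected_Iic fun j _ _ hj => ?_
  rw [Order.succ_eq_add_one] at hj ⊢
  rw [mem_Iic] at hj
  have hprod := one_le_prod_Icc hlam (j.le_succ.trans hj)
  rw [Finset.prod_Icc_succ_top (by omega)]
  exact log_le_log (by linarith) (le_mul_of_one_le_right (by linarith) (hlam _ (by omega) hj))

/-- The tension of the chain `x_j(φ) = (λ₁⋯λ_j)·e^{iφ}` is non-increasing in `φ` on
`(0, π/2]`. -/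
theorem tension_antitone_in_angle (n : ℕ) (hn : 2 ≤ n) (lam : ℕ → ℝ)
    (hlam : ∀ j, 1 ≤ j → j ≤ n → 1 < lam j)
    (x : ℝ → ℕ → UpperHalfPlane)
    (hx : ∀ φ : ℝ, 0 < φ → φ ≤ π / 2 → ∀ j ≤ n,
      ((x φ j : ℂ)) = ((∏ i ∈ Finset.Icc 1 j, lam i : ℝ) : ℂ) * Complex.exp (φ * Complex.I))
    (φ φ' : ℝ) (h1 : 0 < φ) (h2 : φ ≤ φ') (h3 : φ' ≤ π / 2) :
    tension n (x φ') ≤ tension n (x φ) := by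
  have hlam' (j : ℕ) (h1j : 1 ≤ j) (hjn : j ≤ n) : 1 ≤ lam j := (hlam j h1j hjn).le
  have hP_pos {j : ℕ} (hj : j ≤ n) : 0 < ∏ i ∈ Finset.Icc 1 j, lam i :=
    one_pos.trans_le (one_le_prod_Icc hlam' hj)
  have hL := monotoneOn_log_prod_Icc hlam'
  have hsin {ψ : ℝ} (h0 : 0 < ψ) (hψ : ψ ≤ π / 2) : 0 < sin ψ :=
    sin_pos_of_pos_of_lt_pi h0 (by linarith [pi_pos])
  have hτ {ψ : ℝ} (h0 : 0 < ψ) (hψ : ψ ≤ π / 2) : tension n (x ψ) =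
      lineTension (rayDist (sin ψ)⁻¹) n (fun j => log (∏ i ∈ Finset.Icc 1 j, lam i)) :=
    tension_eq_lineTension fun i j hij hj => dist_eq_rayDist
      (hL (mem_Iic.2 (hij.trans hj)) (mem_Iic.2 hj) hij) (hsin h0 hψ)
      (by rw [exp_log (hP_pos (hij.trans hj))]; exact hx ψ h0 hψ i (hij.trans hj))
      (by rw [exp_log (hP_pos hj)]; exact hx ψ h0 hψ j hj)
  have h1' : 0 < φ' := h1.trans_le h2
  rw [hτ h1 (h2.trans h3), hτ h1' h3]
  refine monotoneOn_lineTension_rayDist hn hL (one_le_inv₀ (hsin h1' h3) |>.2 (sin_le_one _))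
    (one_le_inv₀ (hsin h1 (h2.trans h3)) |>.2 (sin_le_one _)) ?_
  exact inv_anti₀ (hsin h1 (h2.trans h3))
    (sin_le_sin_of_le_of_le_pi_div_two (by linarith [pi_pos]) h3 h2)
end

section
/- Let n ≥ 2 and let λ₁,…,λₙ > 1. For φ ∈ (0, π/2] define the chain x_j(φ) = (λ₁⋯λ_j)·e^{iφ} ∈ ℍ² for 0 ≤ j ≤ n. Then as φ → 0⁺, τ(x₀(φ),…,xₙ(φ)) converges to 2·log( [Π_{j=1}^{n−1}(λ_j·λ_{j+1} − 1)] / [(λ₁⋯λₙ − 1)·Π_{j=2}^{n−1}(λ_j − 1)] ). -/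
open UpperHalfPlane Real Filter

open Topology Finset

/-!
Along the ray `arg z = φ`, `d(a e^{iφ}, b e^{iφ}) = 2 arsinh (|b - a| / (2 √(ab) sin φ))`, and since
`arsinh y = log (2y) + o(1)` as `y → ∞` this is `log ((b - a)² / (ab)) - 2 log sin φ + o(1)` as
`φ → 0⁺`. The tension has equally many positive and negative distance terms, so the divergent
`-2 log sin φ` cancels and the limit is the tension of `log ((b - a)² / (ab))
= 2 log (b/a - 1) - (log b - log a)`. The second part is a coboundary and contributes nothing; for
the consecutive partial products `b/a` is `λ_jλ_{j+1}`, `λ_j` or `λ₁⋯λₙ`.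
-/

theorem arsinh_sub_log_two_mul {y : ℝ} (hy : 0 < y) :
    arsinh y - log (2 * y) = log ((1 + √(1 + y⁻¹ ^ 2)) / 2) := by
  have hsqrt : √(1 + y ^ 2) = y * √(1 + y⁻¹ ^ 2) := by
    rw [← sqrt_sq hy.le, ← sqrt_mul (sq_nonneg y), sqrt_sq hy.le]
    congr 1
    field_simp
    ring
  rw [arsinh, ← log_div (by positivity) (by positivity), hsqrt]
  congr 1
  field_simp

theorem tendsto_arsinh_sub_log_two_mul_atTop :
    Tendsto (fun y => arsinh y - log (2 * y)) atTop (𝓝 0) := by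
  have hcont : Tendsto (fun t : ℝ => log ((1 + √(1 + t ^ 2)) / 2)) (𝓝 0) (𝓝 0) := by
    have h : ContinuousAt (fun t : ℝ => log ((1 + √(1 + t ^ 2)) / 2)) 0 :=
      ContinuousAt.log (by fun_prop) (by positivity)
    simpa using h.tendsto
  refine (hcont.comp tendsto_inv_atTop_zero).congr' ?_
  filter_upwards [eventually_gt_atTop 0] with y hy
  exact (arsinh_sub_log_two_mul hy).symm

theorem UpperHalfPlane.dist_of_coe_eq_mul_exp {z w : ℍ} {a b φ : ℝ}
    (hz : (z : ℂ) = a * Complex.exp (φ * Complex.I))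
    (hw : (w : ℂ) = b * Complex.exp (φ * Complex.I)) :
    dist z w = 2 * arsinh (|b - a| / (2 * √(a * b) * |sin φ|)) := by
  have him (c : ℝ) : (c * Complex.exp (φ * Complex.I)).im = c * sin φ := by
    simp [Complex.exp_ofReal_mul_I_im]
  have hdist : dist (z : ℂ) w = |b - a| := by
    rw [hz, hw, dist_comm, Complex.dist_eq, ← sub_mul, norm_mul, Complex.norm_exp_ofReal_mul_I,
      mul_one, ← Complex.ofReal_sub, Complex.norm_real, Real.norm_eq_abs]
  have hsqrt : √(z.im * w.im) = √(a * b) * |sin φ| := by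
    rw [UpperHalfPlane.im, UpperHalfPlane.im, hz, hw, him, him, ← sqrt_sq_eq_abs,
      ← sqrt_mul' _ (sq_nonneg _)]
    ring_nf
  rw [dist_eq, hdist, hsqrt, mul_assoc]

theorem eventually_sin_pos_nhdsGT_zero : ∀ᶠ φ in 𝓝[>] (0 : ℝ), 0 < sin φ := by
  filter_upwards [Ioo_mem_nhdsGT pi_pos] with φ hφ
  exact sin_pos_of_pos_of_lt_pi hφ.1 hφ.2

theorem tendsto_sin_nhdsGT_zero : Tendsto sin (𝓝[>] 0) (𝓝[>] 0) := by
  refine tendsto_nhdsWithin_iff.2 ⟨?_, eventually_sin_pos_nhdsGT_zero⟩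
  simpa using (continuous_sin.tendsto 0).mono_left nhdsWithin_le_nhds

theorem UpperHalfPlane.tendsto_dist_add_two_log_sin {a b : ℝ} (ha : 0 < a) (hb : 0 < b)
    (hab : a ≠ b) {z w : ℝ → ℍ}
    (hz : ∀ᶠ φ in 𝓝[>] 0, (z φ : ℂ) = a * Complex.exp (φ * Complex.I))
    (hw : ∀ᶠ φ in 𝓝[>] 0, (w φ : ℂ) = b * Complex.exp (φ * Complex.I)) :
    Tendsto (fun φ => dist (z φ) (w φ) + 2 * log (sin φ)) (𝓝[>] 0)
      (𝓝 (log ((b - a) ^ 2 / (a * b)))) := by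
  set c := |b - a| / (2 * √(a * b))
  have hc : 0 < c := div_pos (abs_pos.2 (sub_ne_zero.2 hab.symm)) (by positivity)
  have hlog : log ((b - a) ^ 2 / (a * b)) = 2 * log (2 * c) := by
    have hsq : (b - a) ^ 2 / (a * b) = (2 * c) ^ 2 := by
      rw [mul_div_assoc', mul_div_mul_left _ _ two_ne_zero, div_pow, sq_abs,
        sq_sqrt (by positivity)]
    rw [hsq, log_pow, Nat.cast_two]
  have hy : Tendsto (fun φ => c / sin φ) (𝓝[>] 0) atTop :=
    tendsto_sin_nhdsGT_zero.inv_tendsto_nhdsGT_zero.const_mul_atTop hc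
  have h := ((tendsto_arsinh_sub_log_two_mul_atTop.comp hy).const_mul 2).add_const (2 * log (2 * c))
  rw [mul_zero, zero_add] at h
  rw [hlog]
  refine h.congr' ?_
  filter_upwards [hz, hw, eventually_sin_pos_nhdsGT_zero] with φ hzφ hwφ hsin
  rw [UpperHalfPlane.dist_of_coe_eq_mul_exp hzφ hwφ, abs_of_pos hsin, ← div_div,
    Function.comp_apply, mul_div_assoc', log_div (by positivity) hsin.ne']
  ring

noncomputable def chainTension (n : ℕ) (δ : ℕ → ℕ → ℝ) : ℝ :=
  (∑ j ∈ range (n - 1), δ j (j + 2)) - (∑ j ∈ range (n - 2), δ (j + 1) (j + 2)) - δ 0 n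

theorem tension_eq_chainTension (n : ℕ) (x : ℕ → ℍ) :
    tension n x = chainTension n (fun i j => dist (x i) (x j)) :=
  rfl

namespace chainTension

variable {n : ℕ}

theorem congr {δ ε : ℕ → ℕ → ℝ} (hn : 0 < n) (h : ∀ i j, i < j → j ≤ n → δ i j = ε i j) :
    chainTension n δ = chainTension n ε := by
  unfold chainTension
  rw [sum_congr rfl fun j hj => h j (j + 2) (by omega) (by rw [mem_range] at hj; omega),
    sum_congr rfl fun j hj => h (j + 1) (j + 2) (by omega) (by rw [mem_range] at hj; omega), h 0 n hn le_rfl]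

theorem sub (δ ε : ℕ → ℕ → ℝ) :
    chainTension n (fun i j => δ i j - ε i j) = chainTension n δ - chainTension n ε := by
  simp only [chainTension, sum_sub_distrib]
  ring

theorem const_mul (c : ℝ) (δ : ℕ → ℕ → ℝ) :
    chainTension n (fun i j => c * δ i j) = c * chainTension n δ := by
  simp only [chainTension, ← mul_sum]
  ring

theorem add_const (hn : 2 ≤ n) (δ : ℕ → ℕ → ℝ) (c : ℝ) :
    chainTension n (fun i j => δ i j + c) = chainTension n δ := by
  obtain ⟨m, rfl⟩ := Nat.exists_eq_add_of_le' hn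
  simp only [chainTension, sum_add_distrib, sum_const, card_range, nsmul_eq_mul,
    Nat.add_sub_cancel, show m + 2 - 1 = m + 1 by omega]
  push_cast
  ring

theorem sub_eq_zero (hn : 2 ≤ n) (g : ℕ → ℝ) : chainTension n (fun i j => g j - g i) = 0 := by
  obtain ⟨m, rfl⟩ := Nat.exists_eq_add_of_le' hn
  have hshift : ∑ j ∈ range (m + 1), (g (j + 2) - g j) =
      ∑ j ∈ range (m + 1), (g (j + 1 + 1) - g (j + 1)) + ∑ j ∈ range (m + 1), (g (j + 1) - g j) := by
    rw [← sum_add_distrib]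
    exact sum_congr rfl fun j _ => by ring
  simp only [chainTension, Nat.add_sub_cancel, show m + 2 - 1 = m + 1 by omega, hshift,
    sum_range_sub (fun j => g (j + 1)), sum_range_sub g]
  ring

theorem tendsto {ι : Type*} {l : Filter ι} {δ : ι → ℕ → ℕ → ℝ} {L : ℕ → ℕ → ℝ} (hn : 0 < n)
    (h : ∀ i j, i < j → j ≤ n → Tendsto (fun t => δ t i j) l (𝓝 (L i j))) :
    Tendsto (fun t => chainTension n (δ t)) l (𝓝 (chainTension n L)) :=
  ((tendsto_finsetSum _ fun j hj => h j (j + 2) (by omega) (by rw [mem_range] at hj; omega)).sub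
    (tendsto_finsetSum _ fun j hj => h (j + 1) (j + 2) (by omega) (by rw [mem_range] at hj; omega))).sub
    (h 0 n hn le_rfl)

end chainTension

theorem log_sq_sub_div_mul {a b : ℝ} (ha : 0 < a) (hab : a < b) :
    log ((b - a) ^ 2 / (a * b)) = 2 * log (b / a - 1) - (log b - log a) := by
  have hb : 0 < b := ha.trans hab
  have hba : 0 < b / a - 1 := by rw [sub_pos, one_lt_div ha]; exact hab
  rw [show (b - a) ^ 2 / (a * b) = (b / a - 1) ^ 2 / (b / a) by field_simp,
    log_div (by positivity) (by positivity), log_pow, log_div hb.ne' ha.ne']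
  push_cast
  ring

section PartialProducts

variable {lam : ℕ → ℝ} {n : ℕ}

theorem prod_Icc_one_pos (hlam : ∀ j, 1 ≤ j → j ≤ n → 1 < lam j) {j : ℕ} (hj : j ≤ n) :
    0 < ∏ i ∈ Icc 1 j, lam i :=
  prod_pos fun i hi => one_pos.trans (hlam i (mem_Icc.1 hi).1 ((mem_Icc.1 hi).2.trans hj))

theorem prod_Icc_one_lt_prod_Icc_one (hlam : ∀ j, 1 ≤ j → j ≤ n → 1 < lam j) {i j : ℕ}
    (hij : i < j) (hj : j ≤ n) : ∏ k ∈ Icc 1 i, lam k < ∏ k ∈ Icc 1 j, lam k := by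
  have hstep (k) (hk : k + 1 ≤ n) : ∏ i ∈ Icc 1 k, lam i < ∏ i ∈ Icc 1 (k + 1), lam i := by
    rw [prod_Icc_succ_top (by omega)]
    exact lt_mul_right (prod_Icc_one_pos hlam (by omega)) (hlam _ (by omega) hk)
  induction j, hij using Nat.le_induction with
  | base => exact hstep i hj
  | succ j hij ih => exact (ih (by omega)).trans (hstep j hj)

theorem chainTension_log_div_prod_Icc_sub_one (hn : 2 ≤ n)
    (hlam : ∀ j, 1 ≤ j → j ≤ n → 1 < lam j) :
    chainTension n (fun i j => log ((∏ k ∈ Icc 1 j, lam k) / (∏ k ∈ Icc 1 i, lam k) - 1)) =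
      log ((∏ j ∈ Icc 1 (n - 1), (lam j * lam (j + 1) - 1)) /
        (((∏ j ∈ Icc 1 n, lam j) - 1) * ∏ j ∈ Icc 2 (n - 1), (lam j - 1))) := by
  obtain ⟨m, rfl⟩ := Nat.exists_eq_add_of_le' hn
  have hpos (j) (hj : j ≤ m + 2) := (prod_Icc_one_pos hlam hj).ne'
  have hstep (j) : ∏ k ∈ Icc 1 (j + 1), lam k = (∏ k ∈ Icc 1 j, lam k) * lam (j + 1) :=
    prod_Icc_succ_top (by omega) _
  have hNum : ∏ j ∈ Icc 1 (m + 1), (lam j * lam (j + 1) - 1) =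
      ∏ j ∈ range (m + 1), (lam (j + 1) * lam (j + 2) - 1) := by
    rw [← Ico_add_one_right_eq_Icc, prod_Ico_eq_prod_range]
    exact prod_congr rfl fun j _ => by ring_nf
  have hDen : ∏ j ∈ Icc 2 (m + 1), (lam j - 1) = ∏ j ∈ range m, (lam (j + 2) - 1) := by
    rw [← Ico_add_one_right_eq_Icc, prod_Ico_eq_prod_range]
    exact prod_congr rfl fun j _ => by ring_nf
  have hpair (j) (hj : j ∈ range (m + 1)) : 0 < lam (j + 1) * lam (j + 2) - 1 := by
    have := hlam (j + 1) (by omega) (by rw [mem_range] at hj; omega)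
    have := hlam (j + 2) (by omega) (by rw [mem_range] at hj; omega)
    nlinarith
  have hsingle (j) (hj : j ∈ range m) : 0 < lam (j + 2) - 1 := by
    have := hlam (j + 2) (by omega) (by rw [mem_range] at hj; omega)
    linarith
  have hlast : 0 < ∏ k ∈ Icc 1 (m + 2), lam k - 1 := by
    simpa using prod_Icc_one_lt_prod_Icc_one hlam (i := 0) (by omega) le_rfl
  have hpairs : ∑ j ∈ range (m + 1),
      log ((∏ k ∈ Icc 1 (j + 2), lam k) / (∏ k ∈ Icc 1 j, lam k) - 1) =
        ∑ j ∈ range (m + 1), log (lam (j + 1) * lam (j + 2) - 1) := by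
    refine sum_congr rfl fun j hj => ?_
    rw [hstep (j + 1), hstep j, mul_assoc, mul_div_cancel_left₀ _ (hpos j (by rw [mem_range] at hj; omega))]
  have hsingles : ∑ j ∈ range m,
      log ((∏ k ∈ Icc 1 (j + 2), lam k) / (∏ k ∈ Icc 1 (j + 1), lam k) - 1) =
        ∑ j ∈ range m, log (lam (j + 2) - 1) := by
    refine sum_congr rfl fun j hj => ?_
    rw [hstep (j + 1), mul_div_cancel_left₀ _ (hpos (j + 1) (by rw [mem_range] at hj; omega))]
  simp only [chainTension, Nat.add_sub_cancel, show m + 2 - 1 = m + 1 by omega, hpairs, hsingles,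
    zero_lt_one, Icc_eq_empty_of_lt, prod_empty, div_one]
  rw [hNum, hDen, log_div (prod_pos hpair).ne' (mul_pos hlast (prod_pos hsingle)).ne',
    log_mul hlast.ne' (prod_pos hsingle).ne', log_prod fun j hj => (hpair j hj).ne',
    log_prod fun j hj => (hsingle j hj).ne']
  ring

theorem chainTension_log_sq_sub_div_mul_prod_Icc (hn : 2 ≤ n)
    (hlam : ∀ j, 1 ≤ j → j ≤ n → 1 < lam j) :
    chainTension n (fun i j => log (((∏ k ∈ Icc 1 j, lam k) - ∏ k ∈ Icc 1 i, lam k) ^ 2 /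
      ((∏ k ∈ Icc 1 i, lam k) * ∏ k ∈ Icc 1 j, lam k))) =
      2 * log ((∏ j ∈ Icc 1 (n - 1), (lam j * lam (j + 1) - 1)) /
        (((∏ j ∈ Icc 1 n, lam j) - 1) * ∏ j ∈ Icc 2 (n - 1), (lam j - 1))) := by
  rw [chainTension.congr (by omega) fun i j hij hj => log_sq_sub_div_mul
      (prod_Icc_one_pos hlam (hij.le.trans hj)) (prod_Icc_one_lt_prod_Icc_one hlam hij hj),
    chainTension.sub, chainTension.const_mul, chainTension.sub_eq_zero hn,
    chainTension_log_div_prod_Icc_sub_one hn hlam, sub_zero]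

end PartialProducts

/-- As `φ → 0⁺`, the tension of the chain `x_j(φ) = (λ₁⋯λ_j)·e^{iφ}` converges to
`2·log( Π_{j=1}^{n−1}(λ_jλ_{j+1}−1) / ((λ₁⋯λₙ−1)·Π_{j=2}^{n−1}(λ_j−1)) )`. -/
theorem tension_tendsto_at_zero_angle (n : ℕ) (hn : 2 ≤ n) (lam : ℕ → ℝ)
    (hlam : ∀ j, 1 ≤ j → j ≤ n → 1 < lam j)
    (x : ℝ → ℕ → UpperHalfPlane)
    (hx : ∀ φ : ℝ, 0 < φ → φ ≤ π / 2 → ∀ j ≤ n,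
      ((x φ j : ℂ)) = ((∏ i ∈ Finset.Icc 1 j, lam i : ℝ) : ℂ) * Complex.exp (φ * Complex.I)) :
    Filter.Tendsto (fun φ : ℝ => tension n (x φ)) (nhdsWithin 0 (Set.Ioi 0))
      (nhds (2 * Real.log
        ((∏ j ∈ Finset.Icc 1 (n - 1), (lam j * lam (j + 1) - 1)) /
          (((∏ j ∈ Finset.Icc 1 n, lam j) - 1) * ∏ j ∈ Finset.Icc 2 (n - 1), (lam j - 1))))) := by
  set T : ℕ → ℝ := fun j => ∏ i ∈ Finset.Icc 1 j, lam i
  have hxT (j) (hj : j ≤ n) :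
      ∀ᶠ φ in 𝓝[>] 0, (x φ j : ℂ) = T j * Complex.exp (φ * Complex.I) := by
    filter_upwards [Ioo_mem_nhdsGT (by positivity : 0 < π / 2)] with φ hφ
    exact hx φ hφ.1 hφ.2.le j hj
  have hlim := chainTension.tendsto (by omega) fun i j hij hj =>
    tendsto_dist_add_two_log_sin (prod_Icc_one_pos hlam (hij.le.trans hj))
      (prod_Icc_one_pos hlam hj) (prod_Icc_one_lt_prod_Icc_one hlam hij hj).ne
      (hxT i (hij.le.trans hj)) (hxT j hj)
  rw [chainTension_log_sq_sub_div_mul_prod_Icc hn hlam] at hlim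
  simpa only [chainTension.add_const hn, tension_eq_chainTension] using hlim
end

section
/- Let n ≥ 2 and let λ₁,…,λₙ > 1 be real numbers. Then Π_{j=1}^{n−1}(λ_j·λ_{j+1} − 1) ≤ (λ₁·λ₂⋯λₙ − 1)·(λ₂·λ₃⋯λ_{n−1}). -/
lemma aux_prod_sub_one_le (m : ℕ) (lam : ℕ → ℝ)
    (hlam : ∀ j, 1 ≤ j → j ≤ m + 2 → 1 < lam j) :
    (∏ j ∈ Finset.Icc 1 (m + 1), (lam j * lam (j + 1) - 1)) ≤
      ((∏ j ∈ Finset.Icc 1 (m + 2), lam j) - 1) * ∏ j ∈ Finset.Icc 2 (m + 1), lam j := by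
  induction m with
  | zero =>
      have h : Finset.Icc 2 1 = (∅ : Finset ℕ) := by decide
      rw [h]
      simp [Finset.prod_Icc_succ_top (by norm_num : 1 ≤ (1:ℕ)+1), Finset.Icc_self]
  | succ m ih =>
      have ih' := ih (fun j hj hj' => hlam j hj (by omega))
      have hP : 1 < ∏ j ∈ Finset.Icc 1 (m + 2), lam j := by
        have : (∏ j ∈ Finset.Icc 1 (m + 2), (1:ℝ)) < ∏ j ∈ Finset.Icc 1 (m + 2), lam j := by
          apply Finset.prod_lt_prod_of_nonempty
          · intro i _; norm_num
          · intro i hi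
            simp only [Finset.mem_Icc] at hi
            exact hlam i hi.1 (by omega)
          · exact ⟨1, by simp⟩
        simpa using this
      have hQ : (1:ℝ) ≤ ∏ j ∈ Finset.Icc 2 (m + 1), lam j := by
        have : (∏ j ∈ Finset.Icc 2 (m + 1), (1:ℝ)) ≤ ∏ j ∈ Finset.Icc 2 (m + 1), lam j := by
          apply Finset.prod_le_prod
          · intro i _; norm_num
          · intro i hi
            simp only [Finset.mem_Icc] at hi
            exact (hlam i (by omega) (by omega)).le
        simpa using this
      set P := ∏ j ∈ Finset.Icc 1 (m + 2), lam j with hPdef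
      set Q := ∏ j ∈ Finset.Icc 2 (m + 1), lam j with hQdef
      have ha : 1 < lam (m + 2) := hlam _ (by omega) (by omega)
      have hb : 1 < lam (m + 3) := hlam _ (by omega) (by omega)
      rw [Finset.prod_Icc_succ_top (by omega : 1 ≤ m + 2),
          Finset.prod_Icc_succ_top (by omega : 1 ≤ m + 3),
          Finset.prod_Icc_succ_top (by omega : 2 ≤ m + 2)]
      rw [← hPdef, ← hQdef]
      have h1 : (∏ j ∈ Finset.Icc 1 (m + 1), (lam j * lam (j + 1) - 1)) *
          (lam (m + 2) * lam (m + 2 + 1) - 1) ≤ (P - 1) * Q * (lam (m + 2) * lam (m + 2 + 1) - 1) := by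
        apply mul_le_mul_of_nonneg_right ih'
        nlinarith
      refine h1.trans ?_
      have hQ0 : (0:ℝ) ≤ Q := by linarith
      nlinarith [mul_nonneg hQ0 (sub_nonneg.2 hP.le),
                 mul_nonneg (mul_nonneg hQ0 (by linarith : (0:ℝ) ≤ lam (m+2))) (sub_nonneg.2 hb.le)]

/-- For `n ≥ 2` and `λ₁,…,λₙ > 1`:
`Π_{j=1}^{n−1}(λ_jλ_{j+1} − 1) ≤ (λ₁⋯λₙ − 1)·(λ₂⋯λ_{n−1})`. -/
theorem prod_sub_one_le (n : ℕ) (hn : 2 ≤ n) (lam : ℕ → ℝ)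
    (hlam : ∀ j, 1 ≤ j → j ≤ n → 1 < lam j) :
    (∏ j ∈ Finset.Icc 1 (n - 1), (lam j * lam (j + 1) - 1)) ≤
      ((∏ j ∈ Finset.Icc 1 n, lam j) - 1) * ∏ j ∈ Finset.Icc 2 (n - 1), lam j := by
  obtain ⟨m, rfl⟩ : ∃ m, n = m + 2 := ⟨n - 2, by omega⟩
  have h1 : m + 2 - 1 = m + 1 := by omega
  rw [h1]
  exact aux_prod_sub_one_le m lam hlam
end

section
/- Let n ≥ 2, let λ₁,…,λₙ > 1, let φ ∈ (0, π/2], and define the chain x_j = (λ₁⋯λ_j)·e^{iφ} ∈ ℍ² for 0 ≤ j ≤ n (so x₀ = e^{iφ}). Then 0 ≤ τ(x₀,…,xₙ) ≤ 2·Σ_{j=2}^{n−1} 1/(λ_j − 1). -/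
/-!
On the ray `arg z = φ` the hyperbolic distance from `e^{2a} e^{iφ}` to `e^{2a'} e^{iφ}` (`a ≤ a'`)
is `2 A (a' - a)` with `A t = arsinh (c sinh t)` and `c = 1 / sin φ ≥ 1`. Appending `x_{n+1}` to
the chain changes the tension by `2 [(A (q + r) - A q) - (A (p + q + r) - A (p + q))]`, where
`p, q, r` are the half-log gaps `x₀ → x_{n-1} → x_n → x_{n+1}`. This is nonnegative because
`A'` is decreasing on `[0, ∞)`, and at most `2 / (e^{2q} - 1) = 2 / (λ_n - 1)` because `A' ≥ 1`
while `A (q + r) - A q ≤ log sinh (q + r) - log sinh q ≤ r + 1 / (e^{2q} - 1)`, the first step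
since `arsinh u - log u` is decreasing. Induction from `τ(x₀, x₁, x₂) = 0` finishes the proof.
-/

open UpperHalfPlane Real Filter

open Set

lemma hasDerivAt_arsinh_mul_sinh {c : ℝ} (hc : 0 ≤ c) (t : ℝ) :
    HasDerivAt (fun t ↦ arsinh (c * sinh t))
      (√(1 + (c ^ 2 - 1) / (1 + (c * sinh t) ^ 2))) t := by
  refine ((hasDerivAt_arsinh _).comp t ((hasDerivAt_sinh t).const_mul c)).congr_deriv ?_
  have hpos : 0 < 1 + (c * sinh t) ^ 2 := by positivity
  have hsq : 1 + (c ^ 2 - 1) / (1 + (c * sinh t) ^ 2)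
      = (c * cosh t) ^ 2 / (1 + (c * sinh t) ^ 2) := by
    field_simp
    rw [cosh_sq]
    ring
  rw [hsq, sqrt_div' _ hpos.le, sqrt_sq (by positivity), inv_mul_eq_div]

lemma one_le_sqrt_one_add_div {c : ℝ} (hc : 1 ≤ c) (t : ℝ) :
    1 ≤ √(1 + (c ^ 2 - 1) / (1 + (c * sinh t) ^ 2)) :=
  one_le_sqrt.2 (le_add_of_nonneg_right (div_nonneg (by nlinarith) (by positivity)))

lemma monotone_arsinh_mul_sinh_sub_self {c : ℝ} (hc : 1 ≤ c) :
    Monotone (fun t ↦ arsinh (c * sinh t) - t) :=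
  monotone_of_hasDerivAt_nonneg
    (fun t ↦ (hasDerivAt_arsinh_mul_sinh (by linarith) t).sub (hasDerivAt_id t))
    (fun t ↦ sub_nonneg.2 (one_le_sqrt_one_add_div hc t))

lemma antitoneOn_sqrt_one_add_div {c : ℝ} (hc : 1 ≤ c) :
    AntitoneOn (fun t ↦ √(1 + (c ^ 2 - 1) / (1 + (c * sinh t) ^ 2))) (Ici 0) := by
  intro s hs t ht hst
  have hc2 : 0 ≤ c ^ 2 - 1 := by nlinarith
  have hsinh : (c * sinh s) ^ 2 ≤ (c * sinh t) ^ 2 := by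
    have := sinh_nonneg_iff.2 (mem_Ici.1 hs)
    gcongr
    exact sinh_le_sinh.2 hst
  exact sqrt_le_sqrt (add_le_add_right (div_le_div_of_nonneg_left hc2 (by positivity)
    (add_le_add_right hsinh 1)) 1)

lemma antitoneOn_arsinh_mul_sinh_add_sub {c r : ℝ} (hc : 1 ≤ c) (hr : 0 ≤ r) :
    AntitoneOn (fun t ↦ arsinh (c * sinh (t + r)) - arsinh (c * sinh t)) (Ici 0) := by
  have hderiv (t : ℝ) := hasDerivAt_arsinh_mul_sinh (c := c) (by linarith) t
  have hf (t : ℝ) := ((hderiv (t + r)).comp_add_const t r).sub (hderiv t)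
  refine antitoneOn_of_hasDerivWithinAt_nonpos (convex_Ici 0)
    (fun t _ ↦ (hf t).continuousAt.continuousWithinAt) (fun t _ ↦ (hf t).hasDerivWithinAt) ?_
  intro t ht
  rw [interior_Ici] at ht
  exact sub_nonpos.2 (antitoneOn_sqrt_one_add_div hc (mem_Ici.2 (le_of_lt ht))
    (mem_Ici.2 (by linarith [mem_Ioi.1 ht])) (le_add_of_nonneg_right hr))

lemma antitoneOn_arsinh_sub_log : AntitoneOn (fun u ↦ arsinh u - log u) (Ioi 0) := by
  have hf {u : ℝ} (hu : u ∈ Ioi 0) := (hasDerivAt_arsinh u).sub (hasDerivAt_log (ne_of_gt hu))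
  refine antitoneOn_of_hasDerivWithinAt_nonpos (convex_Ioi 0)
    (fun u hu ↦ (hf hu).continuousAt.continuousWithinAt)
    (fun u hu ↦ (hf (interior_subset hu)).hasDerivWithinAt) fun u hu ↦ ?_
  rw [interior_Ioi, mem_Ioi] at hu
  exact sub_nonpos.2 (inv_anti₀ hu (le_sqrt_of_sq_le (by linarith)))

lemma log_sinh_add_sub_log_sinh_le {y r : ℝ} (hy : 0 < y) (hr : 0 ≤ r) :
    log (sinh (y + r)) - log (sinh y) ≤ r + 1 / (exp (2 * y) - 1) := by
  have hE : 0 < exp (2 * y) - 1 := by linarith [one_lt_exp_iff.2 (by linarith : 0 < 2 * y)]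
  have hsy : 0 < sinh y := sinh_pos_iff.2 hy
  have hsyr : 0 < sinh (y + r) := sinh_pos_iff.2 (by linarith)
  have hratio : sinh (y + r) / sinh y ≤ exp r * (exp (2 * y) / (exp (2 * y) - 1)) := by
    have h1 : 2 * sinh y * exp y = exp (2 * y) - 1 := by
      rw [sinh_eq, show 2 * y = y + y by ring, exp_add, exp_neg]
      field_simp
    have h2 : 2 * sinh (y + r) ≤ exp (y + r) := by
      rw [sinh_eq]; linarith [exp_pos (-(y + r))]
    have h3 : exp r * (exp (2 * y) / (exp (2 * y) - 1)) * sinh y = exp (y + r) / 2 := by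
      rw [← h1, exp_add, show 2 * y = y + y by ring, exp_add]
      field_simp
    rw [div_le_iff₀ hsy, h3]
    linarith
  calc log (sinh (y + r)) - log (sinh y)
      = log (sinh (y + r) / sinh y) := (log_div hsyr.ne' hsy.ne').symm
    _ ≤ log (exp r * (exp (2 * y) / (exp (2 * y) - 1))) := log_le_log (by positivity) hratio
    _ = r + log (exp (2 * y) / (exp (2 * y) - 1)) := by
        rw [log_mul (exp_pos r).ne' (div_pos (exp_pos _) hE).ne', log_exp]
    _ ≤ r + (exp (2 * y) / (exp (2 * y) - 1) - 1) := by
        gcongr; exact log_le_sub_one_of_pos (div_pos (exp_pos _) hE)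
    _ = r + 1 / (exp (2 * y) - 1) := by
        field_simp; ring

lemma arsinh_mul_sinh_add_le {c y r : ℝ} (hc : 0 < c) (hy : 0 < y) (hr : 0 ≤ r) :
    arsinh (c * sinh (y + r)) ≤ arsinh (c * sinh y) + r + 1 / (exp (2 * y) - 1) := by
  have hsy : 0 < sinh y := sinh_pos_iff.2 hy
  have hsyr : sinh y ≤ sinh (y + r) := sinh_le_sinh.2 (by linarith)
  have hanti := antitoneOn_arsinh_sub_log (mem_Ioi.2 (mul_pos hc hsy))
    (mem_Ioi.2 (mul_pos hc (hsy.trans_le hsyr))) (mul_le_mul_of_nonneg_left hsyr hc.le)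
  simp only [log_mul hc.ne' hsy.ne', log_mul hc.ne' (hsy.trans_le hsyr).ne'] at hanti
  linarith [log_sinh_add_sub_log_sinh_le hy hr]

lemma dist_eq_of_coe_eq_exp_mul_exp_mul_I {φ a a' : ℝ} (hφ : 0 < sin φ) (h : a ≤ a') {z w : ℍ}
    (hz : (z : ℂ) = (exp (2 * a) : ℂ) * Complex.exp (φ * Complex.I))
    (hw : (w : ℂ) = (exp (2 * a') : ℂ) * Complex.exp (φ * Complex.I)) :
    dist z w = 2 * arsinh ((sin φ)⁻¹ * sinh (a' - a)) := by
  have him {s : ℝ} {u : ℍ} (hu : (u : ℂ) = (exp (2 * s) : ℂ) * Complex.exp (φ * Complex.I)) :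
      u.im = exp (2 * s) * sin φ := by
    rw [← coe_im, hu, Complex.im_ofReal_mul, Complex.exp_ofReal_mul_I_im]
  have hdist : dist (z : ℂ) w = exp (2 * a') - exp (2 * a) := by
    rw [Complex.dist_eq, hz, hw, ← sub_mul, norm_mul, Complex.norm_exp_ofReal_mul_I, mul_one,
      ← Complex.ofReal_sub, Complex.norm_real, norm_of_nonpos, neg_sub]
    linarith [exp_le_exp.2 (by linarith : 2 * a ≤ 2 * a')]
  have hsqrt : √(z.im * w.im) = exp (a + a') * sin φ := by
    rw [him hz, him hw, show exp (2 * a) * sin φ * (exp (2 * a') * sin φ)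
      = (exp (a + a') * sin φ) ^ 2 by
        rw [mul_pow, ← exp_nat_mul, Nat.cast_ofNat, mul_add, exp_add]; ring]
    exact sqrt_sq (by positivity)
  rw [UpperHalfPlane.dist_eq, hdist, hsqrt, sinh_eq]
  congr 2
  rw [show exp (2 * a') = exp (a + a') * exp (a' - a) by rw [← exp_add]; ring_nf,
    show exp (2 * a) = exp (a + a') * exp (-(a' - a)) by rw [← exp_add]; ring_nf]
  field_simp

lemma tension_two (x : ℕ → ℍ) : tension 2 x = 0 := by
  simp [tension]

lemma tension_succ {n : ℕ} (hn : 2 ≤ n) (x : ℕ → ℍ) :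
    tension (n + 1) x = tension n x
      + (dist (x (n - 1)) (x (n + 1)) - dist (x (n - 1)) (x n))
      - (dist (x 0) (x (n + 1)) - dist (x 0) (x n)) := by
  obtain ⟨m, rfl⟩ : ∃ m, n = m + 2 := ⟨n - 2, by omega⟩
  simp only [tension, Nat.add_sub_cancel, show m + 2 + 1 - 1 = m + 1 + 1 by omega,
    show m + 2 + 1 - 2 = m + 1 by omega, show m + 2 - 1 = m + 1 by omega,
    Finset.sum_range_succ]
  ring

theorem tension_bounds_of_dist_eq {c : ℝ} (hc : 1 ≤ c) {n : ℕ} (hn : 2 ≤ n) {x : ℕ → ℍ}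
    {b : ℕ → ℝ} (hb : StrictMonoOn b (Iic n))
    (hd : ∀ j ≤ n, ∀ i ≤ j, dist (x i) (x j) = 2 * arsinh (c * sinh (b j - b i))) :
    0 ≤ tension n x ∧
      tension n x ≤ 2 * ∑ j ∈ Finset.Icc 2 (n - 1), 1 / (exp (2 * (b j - b (j - 1))) - 1) := by
  induction n, hn using Nat.le_induction with
  | base => simp [tension_two]
  | succ n hn ih =>
    obtain ⟨ih_nonneg, ih_le⟩ := ih (hb.mono (Iic_subset_Iic.2 n.le_succ))
      fun j hj i hi ↦ hd j (by omega) i hi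
    set p := b (n - 1) - b 0
    set q := b n - b (n - 1)
    set r := b (n + 1) - b n
    have hp : 0 ≤ p :=
      sub_nonneg.2 (hb.monotoneOn (mem_Iic.2 (by omega)) (mem_Iic.2 (by omega)) (Nat.zero_le _))
    have hq : 0 < q := sub_pos.2 (hb (mem_Iic.2 (by omega)) (mem_Iic.2 (by omega)) (by omega))
    have hr : 0 ≤ r := (sub_pos.2 (hb (mem_Iic.2 (by omega)) (mem_Iic.2 le_rfl) (by omega))).le
    rw [tension_succ hn, hd (n + 1) le_rfl (n - 1) (by omega), hd n (by omega) (n - 1) (by omega),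
      hd (n + 1) le_rfl 0 (by omega), hd n (by omega) 0 (by omega),
      show b (n + 1) - b (n - 1) = q + r by ring, show b (n + 1) - b 0 = p + q + r by ring,
      show b n - b 0 = p + q by ring, show b n - b (n - 1) = q from rfl]
    have hsub := antitoneOn_arsinh_mul_sinh_add_sub hc hr (mem_Ici.2 hq.le)
      (mem_Ici.2 (add_nonneg hp hq.le)) (le_add_of_nonneg_left hp)
    have hlow := monotone_arsinh_mul_sinh_sub_self hc
      (le_add_of_nonneg_right hr : p + q ≤ p + q + r)
    have hup := arsinh_mul_sinh_add_le (zero_lt_one.trans_le hc) hq hr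
    simp only at hsub hlow
    rw [show n + 1 - 1 = n - 1 + 1 by omega, Finset.sum_Icc_succ_top (by omega),
      show n - 1 + 1 = n by omega]
    constructor <;> linarith

/-- For the chain `x_j = (λ₁⋯λ_j)·e^{iφ}` with `λ_j > 1` and `0 < φ ≤ π/2`:
`0 ≤ τ(x₀,…,xₙ) ≤ 2·Σ_{j=2}^{n−1} 1/(λ_j − 1)`. -/
theorem tension_nonneg_and_le (n : ℕ) (hn : 2 ≤ n) (lam : ℕ → ℝ)
    (hlam : ∀ j, 1 ≤ j → j ≤ n → 1 < lam j)
    (φ : ℝ) (hφ1 : 0 < φ) (hφ2 : φ ≤ π / 2)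
    (x : ℕ → UpperHalfPlane)
    (hx : ∀ j ≤ n,
      ((x j : ℂ)) = ((∏ i ∈ Finset.Icc 1 j, lam i : ℝ) : ℂ) * Complex.exp (φ * Complex.I)) :
    0 ≤ tension n x ∧ tension n x ≤ 2 * ∑ j ∈ Finset.Icc 2 (n - 1), 1 / (lam j - 1) := by
  set P : ℕ → ℝ := fun j ↦ ∏ i ∈ Finset.Icc 1 j, lam i
  have hP_succ (j : ℕ) : P (j + 1) = P j * lam (j + 1) := Finset.prod_Icc_succ_top (by omega) lam
  have hP_pos : ∀ j ≤ n, 0 < P j := fun j hj ↦ Finset.prod_pos fun i hi ↦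
    zero_lt_one.trans (hlam i (Finset.mem_Icc.1 hi).1 ((Finset.mem_Icc.1 hi).2.trans hj))
  have hP_mono : StrictMonoOn P (Iic n) := strictMonoOn_Iic_of_lt_succ fun j hj ↦ by
    rw [Order.succ_eq_add_one, hP_succ]
    exact lt_mul_right (hP_pos j hj.le) (hlam (j + 1) (by omega) hj)
  set b : ℕ → ℝ := fun j ↦ log (P j) / 2
  have hb : StrictMonoOn b (Iic n) := fun i hi j hj hij ↦
    div_lt_div_of_pos_right (log_lt_log (hP_pos i hi) (hP_mono hi hj hij)) two_pos
  have hexp : ∀ j ≤ n, exp (2 * b j) = P j := fun j hj ↦ by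
    rw [mul_div_cancel₀ _ two_ne_zero, exp_log (hP_pos j hj)]
  have hsin : 0 < sin φ := sin_pos_of_pos_of_lt_pi hφ1 (by linarith [pi_pos])
  have hdist : ∀ j ≤ n, ∀ i ≤ j, dist (x i) (x j) = 2 * arsinh ((sin φ)⁻¹ * sinh (b j - b i)) :=
    fun j hj i hi ↦ dist_eq_of_coe_eq_exp_mul_exp_mul_I hsin (hb.monotoneOn (hi.trans hj) hj hi)
      (by rw [hexp i (hi.trans hj)]; exact hx i (hi.trans hj)) (by rw [hexp j hj]; exact hx j hj)
  obtain ⟨h_nonneg, h_le⟩ :=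
    tension_bounds_of_dist_eq (one_le_inv_iff₀.2 ⟨hsin, sin_le_one φ⟩) hn hb hdist
  refine ⟨h_nonneg, h_le.trans_eq ?_⟩
  congr 1
  refine Finset.sum_congr rfl fun j hj ↦ ?_
  obtain ⟨hj2, hjn⟩ := Finset.mem_Icc.1 hj
  obtain ⟨k, rfl⟩ : ∃ k, j = k + 1 := ⟨j - 1, by omega⟩
  rw [Nat.add_sub_cancel, mul_sub, exp_sub, hexp _ (by omega), hexp _ (by omega), hP_succ,
    mul_div_cancel_left₀ _ (hP_pos k (by omega)).ne']
end

section
/- Let a, b ≥ 0 satisfy sinh(a−b) > 2·sinh(a/2), and let λ > 1 satisfy cosh(log(λ)/2) = sinh(a−b)/(2·sinh(a/2)). Then λ ≥ (1/4)·e^{a−2b}. -/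
/-- If `a, b ≥ 0` satisfy `sinh(a−b) > 2·sinh(a/2)` and `λ > 1` satisfies
`cosh(log(λ)/2) = sinh(a−b)/(2·sinh(a/2))`, then `λ ≥ (1/4)·e^{a−2b}`. -/
theorem translation_number_lower_bound (a b lam : ℝ) (ha : 0 ≤ a) (hb : 0 ≤ b)
    (hgood : Real.sinh (a - b) > 2 * Real.sinh (a / 2)) (hlam : 1 < lam)
    (h : Real.cosh (Real.log lam / 2) = Real.sinh (a - b) / (2 * Real.sinh (a / 2))) :
    lam ≥ (1 / 4) * Real.exp (a - 2 * b) := by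
  have h1 : 0 ≤ Real.sinh (a / 2) := Real.sinh_nonneg_iff.mpr (by linarith)
  have h2 : a / 2 < a - b := Real.sinh_lt_sinh.mp (by linarith)
  have ha0 : 0 < a := by linarith
  have hs : 0 < Real.sinh (a / 2) := Real.sinh_pos_iff.mpr (by linarith)
  have key : Real.sinh (a / 2) * Real.exp (a / 2 - b) ≤ Real.sinh (a - b) := by
    rw [Real.sinh_eq, Real.sinh_eq]
    have e1 : Real.exp (b - a) ≤ Real.exp (-b) := Real.exp_le_exp.mpr (by linarith)
    have e2 : Real.exp (a / 2) * Real.exp (a / 2 - b) = Real.exp (a - b) := by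
      rw [← Real.exp_add]; ring_nf
    have e3 : Real.exp (-(a / 2)) * Real.exp (a / 2 - b) = Real.exp (-b) := by
      rw [← Real.exp_add]; ring_nf
    have e4 : Real.exp (-(a - b)) = Real.exp (b - a) := by ring_nf
    nlinarith [e1, e2, e3, e4]
  have hlog : 0 < Real.log lam := Real.log_pos hlam
  have hc : Real.cosh (Real.log lam / 2) ≤ Real.exp (Real.log lam / 2) := by
    rw [Real.cosh_eq]
    have := Real.exp_le_exp.mpr (show -(Real.log lam / 2) ≤ Real.log lam / 2 by linarith)
    linarith
  have hdiv : Real.exp (a / 2 - b) / 2 ≤ Real.sinh (a - b) / (2 * Real.sinh (a / 2)) := by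
    rw [div_le_div_iff₀ (by norm_num) (by positivity)]
    nlinarith
  have hE : Real.exp (a / 2 - b) / 2 ≤ Real.exp (Real.log lam / 2) := by
    calc Real.exp (a / 2 - b) / 2 ≤ Real.sinh (a - b) / (2 * Real.sinh (a / 2)) := hdiv
    _ = Real.cosh (Real.log lam / 2) := h.symm
    _ ≤ _ := hc
  have hEE : Real.exp (Real.log lam / 2) * Real.exp (Real.log lam / 2) = lam := by
    rw [← Real.exp_add]
    rw [show Real.log lam / 2 + Real.log lam / 2 = Real.log lam by ring]
    exact Real.exp_log (by linarith)
  have hFF : Real.exp (a / 2 - b) * Real.exp (a / 2 - b) = Real.exp (a - 2 * b) := by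
    rw [← Real.exp_add]; ring_nf
  nlinarith [Real.exp_pos (a / 2 - b), Real.exp_pos (Real.log lam / 2)]
end

section
/- Let (a,b) be a good pair with translation number λ and curvature angle φ, and for j ≥ 0 let x_j = λ^j·e^{iφ} ∈ ℍ². Then for all j ≥ 0, d(x_j, x_{j+1}) = a, and for all j ≥ 1, ⟨x_{j−1}, x_{j+1}⟩_{x_j} = b. -/
open UpperHalfPlane Real Filter

/-!
The points `x_j = λ^j e^{iφ}` lie on a Euclidean ray from the origin, and on such a ray the
points `e^u e^{iφ}` and `e^v e^{iφ}` are at hyperbolic distance `d` with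
`sin φ · sinh (d/2) = sinh (|v - u|/2)`. With `t = log λ`, the definition of `φ` reads
`sinh (t/2) = sin φ · sinh (a/2)`, and together with the definition of `λ` the double angle
formula gives `sinh t = sin φ · sinh (a - b)`. So consecutive points are at distance `a`, points
two steps apart at distance `2(a - b)`, and the Gromov product is `(a + a - 2(a - b))/2 = b`.
-/

theorem Real.exp_sub_exp_eq_mul_sinh (u v : ℝ) :
    exp v - exp u = 2 * exp ((u + v) / 2) * sinh ((v - u) / 2) := by
  rw [sinh_eq, mul_comm 2, mul_assoc, mul_div_cancel₀ _ two_ne_zero, mul_sub, ← exp_add,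
    ← exp_add]
  ring_nf

theorem Real.abs_exp_sub_exp_eq_mul_sinh (u v : ℝ) :
    |exp v - exp u| = 2 * exp ((u + v) / 2) * sinh (|v - u| / 2) := by
  rw [exp_sub_exp_eq_mul_sinh, abs_mul, abs_of_pos (by positivity), abs_sinh, abs_div, abs_two]

theorem Real.sinh_eq_mul_sinh_sub_of_cosh_half_of_sinh_half {a b t s : ℝ}
    (hcosh : cosh (t / 2) = sinh (a - b) / (2 * sinh (a / 2)))
    (hsinh : sinh (t / 2) = s * sinh (a / 2)) :
    sinh t = s * sinh (a - b) := by
  have ha : sinh (a / 2) ≠ 0 := by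
    intro h
    rw [h, mul_zero, div_zero] at hcosh
    exact (cosh_pos _).ne' hcosh
  rw [show t = 2 * (t / 2) by ring, sinh_two_mul, hsinh, hcosh]
  field_simp

namespace UpperHalfPlane

section Ray

variable {z w : ℍ} {u v φ : ℝ}

theorem im_eq_of_coe_eq_exp_mul (hz : (z : ℂ) = exp u * Complex.exp (φ * Complex.I)) :
    z.im = exp u * sin φ := by
  rw [← coe_im, hz, Complex.im_ofReal_mul, Complex.exp_ofReal_mul_I_im]

theorem sin_pos_of_coe_eq_exp_mul (hz : (z : ℂ) = exp u * Complex.exp (φ * Complex.I)) :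
    0 < sin φ :=
  pos_of_mul_pos_right (im_eq_of_coe_eq_exp_mul hz ▸ z.im_pos) (exp_pos u).le

theorem sin_mul_sinh_half_dist_of_coe_eq_exp_mul
    (hz : (z : ℂ) = exp u * Complex.exp (φ * Complex.I))
    (hw : (w : ℂ) = exp v * Complex.exp (φ * Complex.I)) :
    sin φ * sinh (dist z w / 2) = sinh (|v - u| / 2) := by
  have hsin := sin_pos_of_coe_eq_exp_mul hz
  have hcoe : dist (z : ℂ) w = |exp v - exp u| := by
    rw [Complex.dist_eq, hz, hw, ← sub_mul, norm_mul, Complex.norm_exp_ofReal_mul_I, mul_one,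
      ← Complex.ofReal_sub, Complex.norm_real, norm_eq_abs, abs_sub_comm]
  have hsqrt : √(z.im * w.im) = exp ((u + v) / 2) * sin φ := by
    rw [im_eq_of_coe_eq_exp_mul hz, im_eq_of_coe_eq_exp_mul hw,
      ← sqrt_sq (by positivity : 0 ≤ exp ((u + v) / 2) * sin φ), mul_pow, ← exp_nat_mul]
    congr 1
    rw [show ((2 : ℕ) : ℝ) * ((u + v) / 2) = u + v by push_cast; ring, exp_add]
    ring
  rw [sinh_half_dist, hcoe, hsqrt, abs_exp_sub_exp_eq_mul_sinh]
  field_simp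

theorem dist_eq_two_mul_of_coe_eq_exp_mul {c : ℝ}
    (hz : (z : ℂ) = exp u * Complex.exp (φ * Complex.I))
    (hw : (w : ℂ) = exp v * Complex.exp (φ * Complex.I))
    (h : sinh (|v - u| / 2) = sin φ * sinh c) :
    dist z w = 2 * c := by
  rw [← sin_mul_sinh_half_dist_of_coe_eq_exp_mul hz hw,
    mul_right_inj' (sin_pos_of_coe_eq_exp_mul hz).ne', sinh_inj] at h
  linarith

end Ray

end UpperHalfPlane

theorem canonical_chain_dist_and_gromov_general (a b lam φ : ℝ)
    (hlam1 : 1 < lam)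
    (hlam2 : Real.cosh (Real.log lam / 2) = Real.sinh (a - b) / (2 * Real.sinh (a / 2)))
    (hφ3 : Real.sinh (Real.log lam / 2) = Real.sin φ * Real.sinh (a / 2))
    (x : ℕ → UpperHalfPlane)
    (hx : ∀ j : ℕ, (x j : ℂ) = ((lam ^ j : ℝ) : ℂ) * Complex.exp (φ * Complex.I)) :
    (∀ j : ℕ, dist (x j) (x (j + 1)) = a) ∧
      (∀ j : ℕ, 1 ≤ j → gromov (x (j - 1)) (x (j + 1)) (x j) = b) := by
  set t := log lam
  have hxt : ∀ j : ℕ, (x j : ℂ) = exp (j * t) * Complex.exp (φ * Complex.I) := fun j => by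
    rw [hx, exp_nat_mul, exp_log (by linarith)]
  have hgap : ∀ j k : ℕ, |((j + k : ℕ) : ℝ) * t - j * t| / 2 = k * t / 2 := fun j k => by
    rw [Nat.cast_add, add_mul, add_sub_cancel_left, abs_of_nonneg (mul_nonneg k.cast_nonneg (log_nonneg hlam1.le))]
  have hstep : ∀ j : ℕ, dist (x j) (x (j + 1)) = a := fun j => by
    rw [dist_eq_two_mul_of_coe_eq_exp_mul (c := a / 2) (hxt j) (hxt (j + 1))
      (by rw [hgap, Nat.cast_one, one_mul, hφ3])]
    ring
  have htwo : ∀ i : ℕ, dist (x i) (x (i + 2)) = 2 * (a - b) := fun i =>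
    dist_eq_two_mul_of_coe_eq_exp_mul (hxt i) (hxt (i + 2)) (by
      rw [hgap, Nat.cast_two, mul_div_cancel_left₀ _ two_ne_zero,
        sinh_eq_mul_sinh_sub_of_cosh_half_of_sinh_half hlam2 hφ3])
  refine ⟨hstep, fun j hj => ?_⟩
  obtain ⟨i, rfl⟩ := Nat.exists_eq_add_of_le' hj
  rw [gromov, Nat.add_sub_cancel, hstep, hstep, htwo]
  ring

/-- The chain `x_j = λ^j·e^{iφ}` (with `λ`, `φ` the translation number and curvature
angle of a good pair `(a,b)`) is `(a,b)`-canonical: consecutive distances equal `a`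
and Gromov products equal `b`. -/
theorem canonical_chain_dist_and_gromov (a b lam φ : ℝ) (hab : GoodPair a b)
    (hlam1 : 1 < lam)
    (hlam2 : Real.cosh (Real.log lam / 2) = Real.sinh (a - b) / (2 * Real.sinh (a / 2)))
    (hφ1 : 0 < φ) (hφ2 : φ ≤ π / 2)
    (hφ3 : Real.sinh (Real.log lam / 2) = Real.sin φ * Real.sinh (a / 2))
    (x : ℕ → UpperHalfPlane)
    (hx : ∀ j : ℕ, (x j : ℂ) = ((lam ^ j : ℝ) : ℂ) * Complex.exp (φ * Complex.I)) :
    (∀ j : ℕ, dist (x j) (x (j + 1)) = a) ∧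
      (∀ j : ℕ, 1 ≤ j → gromov (x (j - 1)) (x (j + 1)) (x j) = b) :=
  canonical_chain_dist_and_gromov_general a b lam φ hlam1 hlam2 hφ3 x hx
end

section
/- Let n ≥ 2, let λ₁,…,λₙ > 1, let φ ∈ (0, π/2], set t₀ = 1 and t_j = λ₁⋯λ_j for 1 ≤ j ≤ n, and define x_j = t_j·e^{iφ} ∈ ℍ². For 0 ≤ x ≤ y define g_φ(x,y) = (y−x) + √((y−x)² + 4xy·sin²(φ)). Then τ(x₀,…,xₙ) = 2·log( [Π_{j=0}^{n−2} g_φ(t_j, t_{j+2})] / [g_φ(t₀, tₙ)·Π_{j=1}^{n−2} g_φ(t_j, t_{j+1})] ). -/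
open UpperHalfPlane Real Filter

/-- `g_φ(x,y) = (y−x) + √((y−x)² + 4xy·sin²(φ))`. -/
noncomputable def gfun (φ x y : ℝ) : ℝ :=
  (y - x) + Real.sqrt ((y - x) ^ 2 + 4 * x * y * Real.sin φ ^ 2)

/-! For `0 < s ≤ r`, the points `s·e^{iφ}` and `r·e^{iφ}` are at hyperbolic distance
`2·arsinh((r − s)/(2·sin φ·√(sr)))`, which by `arsinh u = log (u + √(u² + 1))` equals
`2·log g_φ(s,r) − log s − log r − 2·log(2·sin φ)`. In the tension each point `x_j` and the
constant term occur with total multiplicity zero, so only the terms `2·log g_φ` survive. -/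

lemma arsinh_div_eq_log_sub_log (u : ℝ) {c : ℝ} (hc : 0 < c) :
    arsinh (u / c) = log (u + √(u ^ 2 + c ^ 2)) - log c := by
  have hroot : √(1 + (u / c) ^ 2) = √(u ^ 2 + c ^ 2) / c := by
    rw [show 1 + (u / c) ^ 2 = (u ^ 2 + c ^ 2) / c ^ 2 by field_simp; ring,
      sqrt_div' _ (sq_nonneg c), sqrt_sq hc.le]
  rw [arsinh, hroot, ← add_div, log_div _ hc.ne']
  have : |u| < √(u ^ 2 + c ^ 2) := by
    rw [← sqrt_sq_eq_abs]; exact sqrt_lt_sqrt (sq_nonneg _) (by nlinarith)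
  linarith [neg_abs_le u]

lemma gfun_pos {φ s r : ℝ} (hφ : 0 < sin φ) (hs : 0 < s) (hr : 0 < r) : 0 < gfun φ s r := by
  have : |r - s| < √((r - s) ^ 2 + 4 * s * r * sin φ ^ 2) := by
    rw [← sqrt_sq_eq_abs]
    exact sqrt_lt_sqrt (sq_nonneg _) (by nlinarith [mul_pos (mul_pos hs hr) (pow_pos hφ 2)])
  unfold gfun
  linarith [neg_abs_le (r - s)]

section Ray

variable {φ : ℝ} {z w : ℍ} {s r : ℝ}

lemma im_eq_of_coe_eq_mul_exp (hz : (z : ℂ) = s * Complex.exp (φ * Complex.I)) :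
    z.im = s * sin φ := by
  rw [← coe_im, hz, Complex.im_ofReal_mul, Complex.exp_ofReal_mul_I_im]

lemma dist_eq_arsinh_of_coe_eq_mul_exp (hφ : 0 < sin φ) (hs : 0 < s) (hsr : s ≤ r)
    (hz : (z : ℂ) = s * Complex.exp (φ * Complex.I))
    (hw : (w : ℂ) = r * Complex.exp (φ * Complex.I)) :
    dist z w = 2 * arsinh ((r - s) / (2 * sin φ * √(s * r))) := by
  have hr : 0 < r := hs.trans_le hsr
  have hdist : dist (z : ℂ) w = r - s := by
    rw [Complex.dist_eq, hz, hw, ← sub_mul, norm_mul, Complex.norm_exp_ofReal_mul_I,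
      ← Complex.ofReal_sub, Complex.norm_real, norm_eq_abs, abs_sub_comm, abs_of_nonneg] <;>
    linarith
  rw [UpperHalfPlane.dist_eq, hdist, im_eq_of_coe_eq_mul_exp hz, im_eq_of_coe_eq_mul_exp hw,
    show s * sin φ * (r * sin φ) = s * r * sin φ ^ 2 by ring, sqrt_mul (by positivity),
    sqrt_sq hφ.le, mul_comm (√(s * r)), ← mul_assoc]

lemma dist_eq_log_gfun_of_coe_eq_mul_exp (hφ : 0 < sin φ) (hs : 0 < s) (hsr : s ≤ r)
    (hz : (z : ℂ) = s * Complex.exp (φ * Complex.I))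
    (hw : (w : ℂ) = r * Complex.exp (φ * Complex.I)) :
    dist z w = 2 * log (gfun φ s r) - log s - log r - 2 * log (2 * sin φ) := by
  have hr : 0 < r := hs.trans_le hsr
  have hc : 0 < 2 * sin φ * √(s * r) := by positivity
  have hgfun : gfun φ s r = (r - s) + √((r - s) ^ 2 + (2 * sin φ * √(s * r)) ^ 2) := by
    rw [gfun, mul_pow, sq_sqrt (by positivity)]; ring_nf
  rw [dist_eq_arsinh_of_coe_eq_mul_exp hφ hs hsr hz hw, arsinh_div_eq_log_sub_log _ hc, ← hgfun,
    log_mul (by positivity) (by positivity), log_sqrt (by positivity), log_mul hs.ne' hr.ne']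
  ring

end Ray

lemma tension_eq_of_dist_eq {n : ℕ} (hn : 2 ≤ n) {x : ℕ → ℍ} (f : ℕ → ℕ → ℝ) (a : ℕ → ℝ)
    (c : ℝ) (hd : ∀ j k, j ≤ k → k ≤ n → dist (x j) (x k) = f j k - a j - a k - c) :
    tension n x = ∑ j ∈ Finset.range (n - 1), f j (j + 2)
      - ∑ j ∈ Finset.range (n - 2), f (j + 1) (j + 2) - f 0 n := by
  obtain ⟨m, rfl⟩ : ∃ m, n = m + 2 := ⟨n - 2, by omega⟩
  rw [tension,
    Finset.sum_congr rfl fun j hj => hd j (j + 2) (by omega) (by simp at hj; omega),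
    Finset.sum_congr rfl fun j hj => hd (j + 1) (j + 2) (by omega) (by simp at hj; omega),
    hd 0 (m + 2) (by omega) le_rfl]
  simp only [Nat.add_sub_cancel, show m + 2 - 1 = m + 1 from rfl, Finset.sum_sub_distrib,
    Finset.sum_const, Finset.card_range, nsmul_eq_mul]
  rw [Finset.sum_range_succ' a, Finset.sum_range_succ fun j => a (j + 2)]
  push_cast
  ring

lemma prod_Icc_one_le_prod_Icc_one {lam : ℕ → ℝ} {n j k : ℕ}
    (hlam : ∀ i, 1 ≤ i → i ≤ n → 1 ≤ lam i) (hjk : j ≤ k) (hk : k ≤ n) :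
    ∏ i ∈ Finset.Icc 1 j, lam i ≤ ∏ i ∈ Finset.Icc 1 k, lam i := by
  refine Finset.prod_le_prod_of_subset_of_one_le (Finset.Icc_subset_Icc_right hjk)
    (fun i hi => ?_) (fun i hi _ => ?_) <;> simp only [Finset.mem_Icc] at hi
  · linarith [hlam i hi.1 (by omega)]
  · exact hlam i hi.1 (by omega)

/-- Explicit formula for the tension of the chain `x_j = t_j·e^{iφ}`, `t_j = λ₁⋯λ_j`. -/
theorem tension_formula (n : ℕ) (hn : 2 ≤ n) (lam : ℕ → ℝ)
    (hlam : ∀ j, 1 ≤ j → j ≤ n → 1 < lam j)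
    (φ : ℝ) (hφ1 : 0 < φ) (hφ2 : φ ≤ π / 2)
    (t : ℕ → ℝ) (ht : ∀ j, t j = ∏ i ∈ Finset.Icc 1 j, lam i)
    (x : ℕ → UpperHalfPlane)
    (hx : ∀ j ≤ n, ((x j : ℂ)) = ((t j : ℝ) : ℂ) * Complex.exp (φ * Complex.I)) :
    tension n x = 2 * Real.log
      ((∏ j ∈ Finset.range (n - 1), gfun φ (t j) (t (j + 2))) /
        (gfun φ (t 0) (t n) * ∏ j ∈ Finset.Icc 1 (n - 2), gfun φ (t j) (t (j + 1)))) := by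
  have hsin : 0 < sin φ := sin_pos_of_pos_of_lt_pi hφ1 (by linarith [pi_pos])
  have ht_pos : ∀ j ≤ n, 0 < t j := fun j hj => ht j ▸ Finset.prod_pos fun i hi => by
    simp only [Finset.mem_Icc] at hi
    linarith [hlam i hi.1 (by omega)]
  have ht_mono : ∀ j k, j ≤ k → k ≤ n → t j ≤ t k := fun j k hjk hk => by
    rw [ht, ht]; exact prod_Icc_one_le_prod_Icc_one (fun i hi hin => (hlam i hi hin).le) hjk hk
  have hg : ∀ j k, j ≤ n → k ≤ n → gfun φ (t j) (t k) ≠ 0 := fun j k hj hk =>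
    (gfun_pos hsin (ht_pos j hj) (ht_pos k hk)).ne'
  rw [tension_eq_of_dist_eq hn (fun j k => 2 * log (gfun φ (t j) (t k))) (fun j => log (t j))
      (2 * log (2 * sin φ)) fun j k hjk hk => dist_eq_log_gfun_of_coe_eq_mul_exp hsin
        (ht_pos j (hjk.trans hk)) (ht_mono j k hjk hk) (hx j (hjk.trans hk)) (hx k hk),
    ← Finset.Ico_add_one_right_eq_Icc, Finset.prod_Ico_eq_prod_range, Nat.add_sub_cancel]
  rw [log_div, log_mul, log_prod, log_prod]
  · simp only [← Finset.mul_sum, add_comm 1]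
    ring
  all_goals simp only [ne_eq, mul_eq_zero, Finset.prod_eq_zero_iff, Finset.mem_range]; grind
end

section
/- Let n ≥ 4 and r > 0. Let R ∈ SL(2,ℝ) be the rotation matrix with entries R₁₁ = cos(π/n), R₁₂ = sin(π/n), R₂₁ = −sin(π/n), R₂₂ = cos(π/n), let p = e^r·i ∈ ℍ², and define x_k = R^k·p (action by fractional linear transformations) for 0 ≤ k ≤ n. Then x_n = x₀, τ(x₀,x₁,…,xₙ) = (n−1)·d(x₀,x₂) − (n−2)·d(x₀,x₁), and τ(x₀,…,xₙ) ≥ d(x₀,x₂). -/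
/-!
The matrix `R` is the elliptic element fixing `i` that rotates `ℍ²` about `i` by `2π/n`, so `R ^ n = -1`
acts trivially and `R` shifts the chain `x₀, x₁, …` by one step isometrically. Hence every diagonal
`d(x_{j-1}, x_{j+1})` equals `d(x₀, x₂)`, every side equals `d(x₀, x₁)`, and the tension collapses to
`(n - 1) d(x₀, x₂) - (n - 2) d(x₀, x₁)`. The law of cosines at `i` gives
`cosh d(p, R_θ p) = 1 + 2 sinh² r sin² θ`, so sides are not longer than diagonals as soon as
`sin (π/n) ≤ sin (2π/n)`, i.e. `n ≥ 3`.
-/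

open UpperHalfPlane Real Filter

open scoped MatrixGroups

namespace Matrix.SpecialLinearGroup

noncomputable def rotation (θ : ℝ) : SL(2, ℝ) :=
  ⟨!![cos θ, sin θ; -sin θ, cos θ], by simp [det_fin_two, ← sq, cos_sq_add_sin_sq]⟩

@[simp]
theorem coe_rotation (θ : ℝ) :
    (rotation θ : Matrix (Fin 2) (Fin 2) ℝ) = !![cos θ, sin θ; -sin θ, cos θ] := rfl

theorem rotation_zero : rotation 0 = 1 := by
  ext i j
  fin_cases i <;> fin_cases j <;> simp

theorem rotation_add (a b : ℝ) : rotation (a + b) = rotation a * rotation b := by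
  ext i j
  fin_cases i <;> fin_cases j <;> simp [cos_add, sin_add] <;> ring

theorem rotation_pow (θ : ℝ) (k : ℕ) : rotation θ ^ k = rotation (k * θ) := by
  induction k with
  | zero => simp [rotation_zero]
  | succ k ih => rw [pow_succ, ih, ← rotation_add]; push_cast; ring_nf

theorem rotation_pi : rotation π = -1 := by
  ext i j
  fin_cases i <;> fin_cases j <;> simp

end Matrix.SpecialLinearGroup

namespace UpperHalfPlane

open Matrix.SpecialLinearGroup

theorem coe_rotation_smul (θ : ℝ) (z : ℍ) :
    ((rotation θ • z : ℍ) : ℂ) = (cos θ * z + sin θ) / (-sin θ * z + cos θ) := by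
  simp [coe_specialLinearGroup_apply]

theorem rotation_denom_ne_zero (θ : ℝ) (z : ℍ) : -sin θ * (z : ℂ) + cos θ ≠ 0 := by
  simpa [denom] using denom_ne_zero (mapGL ℝ (rotation θ)) z

theorem im_rotation_smul (θ : ℝ) (z : ℍ) :
    (rotation θ • z).im = z.im / Complex.normSq (-sin θ * z + cos θ) := by
  rw [MulAction.compHom_smul_def, im_smul_eq_div_normSq]
  simp [denom]

theorem coe_sub_rotation_smul (θ : ℝ) (z : ℍ) :
    (z : ℂ) - (rotation θ • z : ℍ) = -sin θ * (z ^ 2 + 1) / (-sin θ * z + cos θ) := by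
  have hD := rotation_denom_ne_zero θ z
  rw [coe_rotation_smul, eq_div_iff hD, sub_mul, div_mul_cancel₀ _ hD]
  ring

theorem rotation_pi_div_pow_smul {n : ℕ} (hn : n ≠ 0) (z : ℍ) :
    rotation (π / n) ^ n • z = z := by
  rw [rotation_pow, mul_div_cancel₀ π (Nat.cast_ne_zero.mpr hn), rotation_pi]
  ext
  simp [coe_specialLinearGroup_apply]

/-- The hyperbolic law of cosines at `I`, the fixed point of `rotation θ`, whose rotation angle on
`ℍ` is `2θ`; `p` lies at distance `r` from `I`. -/
theorem cosh_dist_rotation_smul (r θ : ℝ) (p : ℍ) (hp : (p : ℂ) = exp r * Complex.I) :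
    cosh (dist p (rotation θ • p)) = 1 + 2 * (sinh r * sin θ) ^ 2 := by
  have him : p.im = exp r := by simp [← coe_im, hp, -Complex.ofReal_exp]
  have hsq : (p : ℂ) ^ 2 + 1 = ((1 - exp r ^ 2 : ℝ) : ℂ) := by
    rw [hp, mul_pow, Complex.I_sq]
    push_cast [-Complex.ofReal_exp]
    ring
  have hN : Complex.normSq (-sin θ * p + cos θ) ≠ 0 :=
    (Complex.normSq_pos.mpr (rotation_denom_ne_zero θ p)).ne'
  rw [cosh_dist, im_rotation_smul, dist_eq_norm, ← Complex.normSq_eq_norm_sq,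
    coe_sub_rotation_smul, Complex.normSq_div, Complex.normSq_mul, hsq, Complex.normSq_neg,
    Complex.normSq_ofReal, Complex.normSq_ofReal, him, sinh_eq, exp_neg]
  generalize Complex.normSq (-sin θ * p + cos θ) = N at hN ⊢
  field_simp
  ring

theorem dist_rotation_smul_le_of_abs_sin_le {r θ φ : ℝ} {p : ℍ}
    (hp : (p : ℂ) = exp r * Complex.I) (h : |sin θ| ≤ |sin φ|) :
    dist p (rotation θ • p) ≤ dist p (rotation φ • p) := by
  have hcosh : cosh (dist p (rotation θ • p)) ≤ cosh (dist p (rotation φ • p)) := by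
    rw [cosh_dist_rotation_smul r θ p hp, cosh_dist_rotation_smul r φ p hp, mul_pow, mul_pow]
    gcongr 1 + 2 * (_ * ?_)
    exact sq_le_sq.mpr h
  simpa only [cosh_le_cosh, abs_of_nonneg dist_nonneg] using hcosh

end UpperHalfPlane

theorem Real.sin_le_sin_two_mul {θ : ℝ} (h₀ : 0 ≤ θ) (h : θ ≤ π / 3) : sin θ ≤ sin (2 * θ) := by
  have hsin : 0 ≤ sin θ := sin_nonneg_of_nonneg_of_le_pi h₀ (by linarith [pi_pos])
  have hcos : 1 / 2 ≤ cos θ := by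
    rw [← cos_pi_div_three]
    exact cos_le_cos_of_nonneg_of_le_pi h₀ (by linarith [pi_pos]) h
  rw [sin_two_mul]
  nlinarith

theorem tension_orbit {G : Type*} [Monoid G] [MulAction G ℍ] [IsIsometricSMul G ℍ]
    (g : G) (p : ℍ) {n : ℕ} (hn : 2 ≤ n) (hper : g ^ n • p = p) :
    tension n (fun k ↦ g ^ k • p) =
      ((n : ℝ) - 1) * dist p (g ^ 2 • p) - ((n : ℝ) - 2) * dist p (g • p) := by
  have hdiag (j : ℕ) : dist (g ^ j • p) (g ^ (j + 2) • p) = dist p (g ^ 2 • p) := by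
    rw [pow_add, mul_smul, dist_smul]
  have hside (j : ℕ) : dist (g ^ (j + 1) • p) (g ^ (j + 2) • p) = dist p (g • p) := by
    rw [pow_succ g (j + 1), mul_smul, dist_smul]
  simp only [tension, hdiag, hside, Finset.sum_const, Finset.card_range, nsmul_eq_mul, pow_zero,
    one_smul, hper, dist_self, Nat.cast_sub (by omega : 1 ≤ n), Nat.cast_sub hn]
  push_cast
  ring

open Matrix.SpecialLinearGroup in
theorem regular_polygon_tension_general (n : ℕ) (hn : 4 ≤ n) (r : ℝ)
    (R : Matrix.SpecialLinearGroup (Fin 2) ℝ)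
    (hR : (R : Matrix (Fin 2) (Fin 2) ℝ) =
      !![Real.cos (π / n), Real.sin (π / n); -Real.sin (π / n), Real.cos (π / n)])
    (p : UpperHalfPlane) (hp : (p : ℂ) = Real.exp r * Complex.I)
    (x : ℕ → UpperHalfPlane) (hx : ∀ k : ℕ, x k = R ^ k • p) :
    x n = x 0 ∧
      tension n x = ((n : ℝ) - 1) * dist (x 0) (x 2) - ((n : ℝ) - 2) * dist (x 0) (x 1) ∧
      tension n x ≥ dist (x 0) (x 2) := by
  obtain rfl : R = rotation (π / n) := Subtype.ext hR
  obtain rfl : x = fun k ↦ rotation (π / n) ^ k • p := funext hx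
  have hper : rotation (π / n) ^ n • p = p := rotation_pi_div_pow_smul (by omega) p
  have hside_le_diag : dist p (rotation (π / n) • p) ≤ dist p (rotation (π / n) ^ 2 • p) := by
    have h₀ : 0 ≤ π / n := by positivity
    have h₃ : π / n ≤ π / 3 := by gcongr; exact_mod_cast (by omega : 3 ≤ n)
    rw [rotation_pow, Nat.cast_ofNat]
    exact dist_rotation_smul_le_of_abs_sin_le hp <|
      abs_le_abs_of_nonneg (sin_nonneg_of_nonneg_of_le_pi h₀ (by linarith [pi_pos]))
        (sin_le_sin_two_mul h₀ h₃)
  simp only [pow_zero, one_smul, pow_one]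
  rw [tension_orbit _ _ (by omega) hper]
  refine ⟨hper, rfl, ?_⟩
  have hn' : (4 : ℝ) ≤ n := by exact_mod_cast hn
  nlinarith

/-- A regular hyperbolic `n`-gon (`n ≥ 4`) inscribed in the circle of radius `r`
centered at `i`, wrapped around once: `x_n = x_0`, the tension of the chain equals
`(n−1)·d(x₀,x₂) − (n−2)·d(x₀,x₁)`, and it is at least `d(x₀,x₂)`. -/
theorem regular_polygon_tension (n : ℕ) (hn : 4 ≤ n) (r : ℝ) (hr : 0 < r)
    (R : Matrix.SpecialLinearGroup (Fin 2) ℝ)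
    (hR : (R : Matrix (Fin 2) (Fin 2) ℝ) =
      !![Real.cos (π / n), Real.sin (π / n); -Real.sin (π / n), Real.cos (π / n)])
    (p : UpperHalfPlane) (hp : (p : ℂ) = Real.exp r * Complex.I)
    (x : ℕ → UpperHalfPlane) (hx : ∀ k : ℕ, x k = R ^ k • p) :
    x n = x 0 ∧
      tension n x = ((n : ℝ) - 1) * dist (x 0) (x 2) - ((n : ℝ) - 2) * dist (x 0) (x 1) ∧
      tension n x ≥ dist (x 0) (x 2) :=
  regular_polygon_tension_general n hn r R hR p hp x hx
end

section
/- Fix n ≥ 4. For r > 0 let R ∈ SL(2,ℝ) be the rotation matrix with entries R₁₁ = cos(π/n), R₁₂ = sin(π/n), R₂₁ = −sin(π/n), R₂₂ = cos(π/n), let p_r = e^r·i ∈ ℍ², and define the chain x_k(r) = R^k·p_r (action by fractional linear transformations) for 0 ≤ k ≤ n. Then τ(x₀(r),…,xₙ(r)) tends to infinity as r → ∞. -/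
open UpperHalfPlane Real Filter

/-- The point `e^r·i` of `ℍ²`. -/
noncomputable def expI (r : ℝ) : UpperHalfPlane := ⟨⟨0, Real.exp r⟩, Real.exp_pos r⟩

/-!
The matrix `rotationMatrix θ` acts on `ℍ` as the rotation about `i` through the angle `2θ`, so
`x_k = R^k • e^r i` runs around the hyperbolic circle of radius `r` about `i`. Any two points of
that circle `k` steps apart are at distance `d_k` with `sinh (d_k / 2) = |sin (kπ/n)| sinh r`, and
`Rⁿ = -1` acts trivially, so the chain closes up. Hence the tension is
`(n - 1) d₂ - (n - 2) d₁ ≥ d₂`, and `d₂ → ∞` because `sin (2π/n) ≠ 0`.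
-/

theorem coe_expI (r : ℝ) : (expI r : ℂ) = exp r * Complex.I := by
  apply Complex.ext <;> simp only [expI, coe_mk, Complex.mul_re, Complex.mul_im, Complex.ofReal_re,
    Complex.ofReal_im, Complex.I_re, Complex.I_im] <;> ring

noncomputable def rotationMatrix (θ : ℝ) : Matrix (Fin 2) (Fin 2) ℝ :=
  !![cos θ, sin θ; -sin θ, cos θ]

theorem rotationMatrix_mul (a b : ℝ) :
    rotationMatrix a * rotationMatrix b = rotationMatrix (a + b) := by
  ext i j
  fin_cases i <;> fin_cases j <;>
    simp only [rotationMatrix, Matrix.mul_apply, Matrix.of_apply, Matrix.cons_val',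
      Matrix.cons_val_fin_one, Matrix.cons_val_zero, Matrix.cons_val_one, Fin.sum_univ_two,
      Fin.isValue, Fin.zero_eta, Fin.mk_one, cos_add, sin_add, neg_mul, mul_neg, neg_add_rev] <;>
    ring

theorem coe_pow_of_coe_eq_rotationMatrix {R : Matrix.SpecialLinearGroup (Fin 2) ℝ} {θ : ℝ}
    (hR : (R : Matrix (Fin 2) (Fin 2) ℝ) = rotationMatrix θ) (k : ℕ) :
    ((R ^ k : Matrix.SpecialLinearGroup (Fin 2) ℝ) : Matrix (Fin 2) (Fin 2) ℝ) =
      rotationMatrix (k * θ) := by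
  induction k with
  | zero => simp [rotationMatrix, Matrix.one_fin_two]
  | succ k ih =>
    rw [pow_succ, Matrix.SpecialLinearGroup.coe_mul, ih, hR, rotationMatrix_mul, Nat.cast_succ,
      add_one_mul]

/-- The distance between two points of the hyperbolic circle of radius `r` that subtend the
angle `2θ` at its centre. -/
noncomputable def chordLength (θ r : ℝ) : ℝ :=
  2 * arsinh (|sin θ| * |sinh r|)

theorem cos_sq_add_sin_sq_mul_sq_pos (θ : ℝ) {y : ℝ} (hy : y ≠ 0) :
    0 < cos θ ^ 2 + sin θ ^ 2 * y ^ 2 := by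
  rcases eq_or_ne (sin θ) 0 with h | h
  · nlinarith [sin_sq_add_cos_sq θ]
  · positivity

theorem coe_smul_expI_of_coe_eq_rotationMatrix {g : Matrix.SpecialLinearGroup (Fin 2) ℝ}
    {θ : ℝ} (hg : (g : Matrix (Fin 2) (Fin 2) ℝ) = rotationMatrix θ) (r : ℝ) :
    ((g • expI r : UpperHalfPlane) : ℂ) =
      ⟨cos θ * sin θ * (1 - exp r ^ 2) / (cos θ ^ 2 + sin θ ^ 2 * exp r ^ 2),
        exp r / (cos θ ^ 2 + sin θ ^ 2 * exp r ^ 2)⟩ := by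
  rw [coe_specialLinearGroup_apply, hg, rotationMatrix, coe_expI]
  simp only [Matrix.of_apply, Matrix.cons_val', Matrix.cons_val_zero, Matrix.cons_val_one,
    Matrix.empty_val', Matrix.cons_val_fin_one, Algebra.algebraMap_self, RingHom.id_apply]
  have hunit := sin_sq_add_cos_sq θ
  have hQ := cos_sq_add_sin_sq_mul_sq_pos θ (exp_pos r).ne'
  generalize cos θ = c at hunit hQ ⊢
  generalize sin θ = s at hunit hQ ⊢
  generalize exp r = y at hQ ⊢
  set Q := c ^ 2 + s ^ 2 * y ^ 2
  have hnormSq : Complex.normSq (((-s : ℝ) : ℂ) * (y * Complex.I) + c) = Q := by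
    rw [show ((-s : ℝ) : ℂ) * (y * Complex.I) + c = c + ((-s * y : ℝ) : ℂ) * Complex.I by
      push_cast; ring, Complex.normSq_add_mul_I]
    ring
  apply Complex.ext <;>
    simp only [Complex.div_re, Complex.div_im, hnormSq] <;>
    simp only [Complex.add_re, Complex.add_im, Complex.mul_re, Complex.mul_im, Complex.neg_re,
      Complex.neg_im, Complex.ofReal_re, Complex.ofReal_im, Complex.ofReal_neg, Complex.I_re,
      Complex.I_im, mul_zero, zero_mul, mul_one, sub_self, add_zero, zero_add, neg_zero, neg_mul,
      mul_neg] <;>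
    field_simp
  · ring
  · linear_combination y * hunit

theorem dist_smul_expI_of_coe_eq_rotationMatrix {g : Matrix.SpecialLinearGroup (Fin 2) ℝ}
    {θ : ℝ} (hg : (g : Matrix (Fin 2) (Fin 2) ℝ) = rotationMatrix θ) (r : ℝ) :
    dist (g • expI r) (expI r) = chordLength θ r := by
  have hsinh : sinh r = (exp r ^ 2 - 1) / (2 * exp r) := by
    rw [sinh_eq, exp_neg]; field_simp
  rw [chordLength, dist_eq_iff_eq_sq_sinh (mul_nonneg zero_le_two (arsinh_nonneg_iff.mpr
      (by positivity))), mul_div_cancel_left₀ _ two_ne_zero, sinh_arsinh, Complex.dist_eq,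
    Complex.sq_norm, Complex.normSq_apply, ← coe_im, ← coe_im,
    coe_smul_expI_of_coe_eq_rotationMatrix hg, coe_expI, mul_pow, sq_abs, sq_abs, hsinh]
  have hunit := sin_sq_add_cos_sq θ
  have hQ := cos_sq_add_sin_sq_mul_sq_pos θ (exp_pos r).ne'
  have hy := exp_pos r
  generalize cos θ = c at hunit hQ ⊢
  generalize sin θ = s at hunit hQ ⊢
  generalize exp r = y at hy hQ ⊢
  set Q := c ^ 2 + s ^ 2 * y ^ 2
  simp only [Complex.sub_re, Complex.sub_im, Complex.mul_re, Complex.mul_im, Complex.ofReal_re,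
    Complex.ofReal_im, Complex.I_re, Complex.I_im, mul_zero, mul_one, sub_self, sub_zero, add_zero]
  field_simp
  linear_combination (4 * y ^ 2 * c ^ 2 + 8 * s ^ 2 * y ^ 4 - 4 * y ^ 2 - 4 * s ^ 2 * y ^ 2) * hunit

theorem dist_pow_smul_expI_of_coe_eq_rotationMatrix {R : Matrix.SpecialLinearGroup (Fin 2) ℝ}
    {θ : ℝ} (hR : (R : Matrix (Fin 2) (Fin 2) ℝ) = rotationMatrix θ) (r : ℝ) (j k : ℕ) :
    dist (R ^ j • expI r) (R ^ (j + k) • expI r) = chordLength (k * θ) r := by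
  rw [dist_comm, pow_add, mul_smul, dist_smul,
    dist_smul_expI_of_coe_eq_rotationMatrix (coe_pow_of_coe_eq_rotationMatrix hR k)]

theorem chordLength_le_chordLength {a b : ℝ} (h : |sin a| ≤ |sin b|) (r : ℝ) :
    chordLength a r ≤ chordLength b r := by
  unfold chordLength
  gcongr

theorem tendsto_chordLength_atTop {θ : ℝ} (h : sin θ ≠ 0) :
    Tendsto (chordLength θ) atTop atTop := by
  have habs : Tendsto (fun r => |sinh r|) atTop atTop :=
    tendsto_atTop_mono (fun r => le_abs_self (sinh r)) sinhOrderIso.tendsto_atTop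
  exact (sinhOrderIso.symm.tendsto_atTop.comp
    (habs.const_mul_atTop (abs_pos.mpr h))).const_mul_atTop two_pos

theorem abs_sin_le_abs_sin_two_mul {θ : ℝ} (h₀ : 0 ≤ θ) (h₁ : θ ≤ π / 3) :
    |sin θ| ≤ |sin (2 * θ)| := by
  have hsin : 0 ≤ sin θ := sin_nonneg_of_nonneg_of_le_pi h₀ (by linarith [pi_pos])
  have hcos : 1 / 2 ≤ cos θ := by
    rw [← cos_pi_div_three]
    exact cos_le_cos_of_nonneg_of_le_pi h₀ (by linarith [pi_pos]) h₁
  rw [sin_two_mul, abs_of_nonneg hsin, abs_of_nonneg (by positivity)]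
  nlinarith

theorem tension_eq_of_dist_eq_s18 {x : ℕ → UpperHalfPlane} {d₁ d₂ : ℝ}
    (h₁ : ∀ j, dist (x j) (x (j + 1)) = d₁) (h₂ : ∀ j, dist (x j) (x (j + 2)) = d₂) (n : ℕ) :
    tension n x = (n - 1 : ℕ) * d₂ - (n - 2 : ℕ) * d₁ - dist (x 0) (x n) := by
  simp only [tension, h₂, fun j => h₁ (j + 1), Finset.sum_const, Finset.card_range,
    nsmul_eq_mul]

theorem le_tension_of_dist_eq {x : ℕ → UpperHalfPlane} {d₁ d₂ : ℝ} {n : ℕ} (hn : 2 ≤ n)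
    (h₁ : ∀ j, dist (x j) (x (j + 1)) = d₁) (h₂ : ∀ j, dist (x j) (x (j + 2)) = d₂)
    (hd : d₁ ≤ d₂) (hx : x n = x 0) :
    d₂ ≤ tension n x := by
  obtain ⟨m, rfl⟩ := Nat.exists_eq_add_of_le hn
  rw [tension_eq_of_dist_eq_s18 h₁ h₂, hx, dist_self, show 2 + m - 1 = m + 1 by omega,
    show 2 + m - 2 = m by omega]
  push_cast
  nlinarith

/-- The tension of the regular hyperbolic `n`-gon chain inscribed in the circle of
radius `r` centered at `i` tends to infinity as `r → ∞`. -/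
theorem regular_polygon_tension_tendsto_atTop (n : ℕ) (hn : 4 ≤ n)
    (R : Matrix.SpecialLinearGroup (Fin 2) ℝ)
    (hR : (R : Matrix (Fin 2) (Fin 2) ℝ) =
      !![Real.cos (π / n), Real.sin (π / n); -Real.sin (π / n), Real.cos (π / n)]) :
    Filter.Tendsto (fun r : ℝ => tension n (fun k => R ^ k • expI r))
      Filter.atTop Filter.atTop := by
  have hθ : 0 < π / n := by positivity
  have hθ4 : π / n ≤ π / 4 :=
    div_le_div_of_nonneg_left pi_pos.le (by norm_num) (by exact_mod_cast hn)
  have hdist := dist_pow_smul_expI_of_coe_eq_rotationMatrix hR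
  have hside (r : ℝ) (j : ℕ) : dist (R ^ j • expI r) (R ^ (j + 1) • expI r) =
      chordLength (π / n) r := by simpa using hdist r j 1
  have hdiag (r : ℝ) (j : ℕ) : dist (R ^ j • expI r) (R ^ (j + 2) • expI r) =
      chordLength (2 * (π / n)) r := by simpa using hdist r j 2
  have hclosed (r : ℝ) : R ^ n • expI r = R ^ 0 • expI r := by
    have h := hdist r 0 n
    rw [zero_add, mul_div_cancel₀ _ (by positivity), chordLength, sin_pi, abs_zero, zero_mul,
      arsinh_zero, mul_zero, dist_eq_zero] at h
    exact h.symm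
  have hshort : |sin (π / n)| ≤ |sin (2 * (π / n))| :=
    abs_sin_le_abs_sin_two_mul hθ.le (by linarith [pi_pos])
  exact tendsto_atTop_mono
    (fun r => le_tension_of_dist_eq (by omega) (hside r) (hdiag r)
      (chordLength_le_chordLength hshort r) (hclosed r))
    (tendsto_chordLength_atTop
      (sin_pos_of_pos_of_lt_pi (by positivity) (by linarith [pi_pos])).ne')
end
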